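/- arXiv:1312.3586 — 6 statements merged into one kernel-verified Lean document; each statement's English description precedes it below -/
import Mathlib

section
/- There do not exist unit vectors φ, ψ ∈ ℂ⁴ such that ⟨ψ, Mφ⟩ = 0 and ⟨φ, Mφ⟩ = ⟨ψ, Mψ⟩ for every matrix M ∈ L₀. -/
open Matrix

local notation "𝒄" => starRingEnd ℂ

/-- η = exp(iπ/4). -/
noncomputable def eta : ℂ := Complex.exp (Real.pi / 4 * Complex.I)

lemma eta_eq : eta = ((Real.sqrt 2 / 2 : ℝ) : ℂ) * (1 + Complex.I) := by
  have h1 : (Real.pi / 4 * Complex.I : ℂ) = ((Real.pi / 4 : ℝ) : ℂ) * Complex.I := by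
    push_cast; ring
  rw [eta, h1, Complex.exp_mul_I, ← Complex.ofReal_cos, ← Complex.ofReal_sin,
    Real.cos_pi_div_four, Real.sin_pi_div_four]
  push_cast; ring

lemma eta_sq : eta ^ 2 = Complex.I := by
  have h : ((Real.sqrt 2 : ℝ) : ℂ) ^ 2 = 2 := by
    norm_cast
    rw [Real.sq_sqrt]; norm_num
  rw [eta_eq]
  push_cast
  linear_combination ((1 + Complex.I) ^ 2 / 4) * h + (1 / 2) * Complex.I_sq

lemma eta_conj : 𝒄 eta = -Complex.I * eta := by
  rw [eta_eq, _root_.map_mul, _root_.map_add, _root_.map_one, Complex.conj_I, Complex.conj_ofReal]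
  linear_combination ((Real.sqrt 2 / 2 : ℝ) : ℂ) * Complex.I_sq

lemma eta_ne : eta ≠ 0 := Complex.exp_ne_zero _

lemma eta_cc : 𝒄 eta * eta = 1 := by
  linear_combination eta * eta_conj - Complex.I * eta_sq - Complex.I_sq

lemma eta_comb_ne (p q : ℝ) (h : ¬(p = 0 ∧ q = 0)) :
    𝒄 eta * ((p : ℝ) : ℂ) + eta * ((q : ℝ) : ℂ) ≠ 0 := by
  intro h0
  have h1 : eta * (((q : ℝ) : ℂ) - Complex.I * ((p : ℝ) : ℂ)) = 0 := by
    linear_combination h0 - ((p : ℝ) : ℂ) * eta_conj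
  have h2 : ((q : ℝ) : ℂ) - Complex.I * ((p : ℝ) : ℂ) = 0 :=
    (mul_eq_zero.mp h1).resolve_left eta_ne
  rw [Complex.ext_iff] at h2
  simp [Complex.mul_re, Complex.mul_im] at h2
  exact h ⟨h2.2, h2.1⟩

lemma cz (z : ℂ) : 𝒄 z = 0 ↔ z = 0 := _root_.map_eq_zero _

/-- Degenerate case helper. -/
lemma deg (x0 x1 y0 y1 : ℂ)
    (g00 : 𝒄 x0 * x0 = 𝒄 y0 * y0)
    (g01 : 𝒄 x0 * x1 = 𝒄 y0 * y1)
    (g11 : 𝒄 x1 * x1 = 𝒄 y1 * y1)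
    (h : 𝒄 eta * (𝒄 y0 * x0) + eta * (𝒄 y1 * x1) = 0) :
    x0 = 0 ∧ x1 = 0 := by
  have huv : 𝒄 y0 * x0 = -Complex.I * (𝒄 y1 * x1) := by
    linear_combination eta * h - (𝒄 y0 * x0) * eta_cc - (𝒄 y1 * x1) * eta_sq
  have key2 : ((Complex.normSq (𝒄 x0 * x1) : ℝ) : ℂ)
      = -Complex.I * ((Complex.normSq (𝒄 y1 * x1) : ℝ) : ℂ) := by
    rw [← Complex.mul_conj, ← Complex.mul_conj]
    simp only [RingHom.map_mul, Complex.conj_conj]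
    linear_combination (x0 * 𝒄 x1) * g01 + (y1 * 𝒄 x1) * huv
  have him := congrArg Complex.im key2
  simp only [Complex.ofReal_im, Complex.mul_im, Complex.neg_im, Complex.neg_re,
    Complex.I_im, Complex.I_re, Complex.ofReal_re] at him
  -- him : 0 = ... -normSq (𝒄 y1 * x1) ...
  have hy1x1 : 𝒄 y1 * x1 = 0 := by
    apply Complex.normSq_eq_zero.mp
    linarith [him]
  have hx1 : x1 = 0 := by
    rcases mul_eq_zero.mp hy1x1 with h' | h'
    · have hy1 : y1 = 0 := (cz y1).mp h'
      have hz : 𝒄 x1 * x1 = 0 := by rw [g11, hy1]; simp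
      rcases mul_eq_zero.mp hz with h'' | h''
      · exact (cz x1).mp h''
      · exact h''
    · exact h'
  have hy0x0 : 𝒄 y0 * x0 = 0 := by rw [huv, hx1]; ring
  have hx0 : x0 = 0 := by
    rcases mul_eq_zero.mp hy0x0 with h' | h'
    · have hy0 : y0 = 0 := (cz y0).mp h'
      have hz : 𝒄 x0 * x0 = 0 := by rw [g00, hy0]; simp
      rcases mul_eq_zero.mp hz with h'' | h''
      · exact (cz x0).mp h''
      · exact h''
    · exact h'
  exact ⟨hx0, hx1⟩

lemma core (a0 a1 b0 b1 c0 c1 d0 d1 : ℂ)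
    (hn1 : 𝒄 a0 * a0 + 𝒄 a1 * a1 + 𝒄 b0 * b0 + 𝒄 b1 * b1 = 1)
    (hn2 : 𝒄 c0 * c0 + 𝒄 c1 * c1 + 𝒄 d0 * d0 + 𝒄 d1 * d1 = 1)
    (hR00 : 𝒄 c0 * a0 + 𝒄 d0 * b0 = 0)
    (hR01 : 𝒄 c0 * a1 + 𝒄 d0 * b1 = 0)
    (hR10 : 𝒄 c1 * a0 + 𝒄 d1 * b0 = 0)
    (hR11 : 𝒄 c1 * a1 + 𝒄 d1 * b1 = 0)
    (h5 : 𝒄 c0 * 𝒄 eta * b0 + 𝒄 c1 * eta * b1 + 𝒄 d0 * eta * a0 + 𝒄 d1 * 𝒄 eta * a1 = 0)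
    (hG00 : 𝒄 a0 * a0 + 𝒄 b0 * b0 = 𝒄 c0 * c0 + 𝒄 d0 * d0)
    (hG01 : 𝒄 a0 * a1 + 𝒄 b0 * b1 = 𝒄 c0 * c1 + 𝒄 d0 * d1)
    (hG11 : 𝒄 a1 * a1 + 𝒄 b1 * b1 = 𝒄 c1 * c1 + 𝒄 d1 * d1)
    (h10 : 𝒄 a0 * 𝒄 eta * b0 + 𝒄 a1 * eta * b1 + 𝒄 b0 * eta * a0 + 𝒄 b1 * 𝒄 eta * a1
      = 𝒄 c0 * 𝒄 eta * d0 + 𝒄 c1 * eta * d1 + 𝒄 d0 * eta * c0 + 𝒄 d1 * 𝒄 eta * c1) :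
    False := by
  by_cases ha : a0 = 0 ∧ a1 = 0
  · -- Case a = 0
    obtain ⟨rfl, rfl⟩ := ha
    have hbne : ¬(b0 = 0 ∧ b1 = 0) := by
      rintro ⟨rfl, rfl⟩; simp at hn1
    have hd0b0 : 𝒄 d0 * b0 = 0 := by linear_combination hR00
    have hd0b1 : 𝒄 d0 * b1 = 0 := by linear_combination hR01
    have hd1b0 : 𝒄 d1 * b0 = 0 := by linear_combination hR10
    have hd1b1 : 𝒄 d1 * b1 = 0 := by linear_combination hR11
    have hd : d0 = 0 ∧ d1 = 0 := by
      rcases not_and_or.mp hbne with hb | hb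
      · exact ⟨(cz d0).mp ((mul_eq_zero.mp hd0b0).resolve_right hb),
          (cz d1).mp ((mul_eq_zero.mp hd1b0).resolve_right hb)⟩
      · exact ⟨(cz d0).mp ((mul_eq_zero.mp hd0b1).resolve_right hb),
          (cz d1).mp ((mul_eq_zero.mp hd1b1).resolve_right hb)⟩
    obtain ⟨rfl, rfl⟩ := hd
    have := deg b0 b1 c0 c1 (by linear_combination hG00) (by linear_combination hG01)
      (by linear_combination hG11) (by linear_combination h5)
    exact hbne this
  · by_cases hb : b0 = 0 ∧ b1 = 0
    · -- Case b = 0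
      obtain ⟨rfl, rfl⟩ := hb
      have hc0a0 : 𝒄 c0 * a0 = 0 := by linear_combination hR00
      have hc0a1 : 𝒄 c0 * a1 = 0 := by linear_combination hR01
      have hc1a0 : 𝒄 c1 * a0 = 0 := by linear_combination hR10
      have hc1a1 : 𝒄 c1 * a1 = 0 := by linear_combination hR11
      have hcc : c0 = 0 ∧ c1 = 0 := by
        rcases not_and_or.mp ha with ha' | ha'
        · exact ⟨(cz c0).mp ((mul_eq_zero.mp hc0a0).resolve_right ha'),
            (cz c1).mp ((mul_eq_zero.mp hc1a0).resolve_right ha')⟩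
        · exact ⟨(cz c0).mp ((mul_eq_zero.mp hc0a1).resolve_right ha'),
            (cz c1).mp ((mul_eq_zero.mp hc1a1).resolve_right ha')⟩
      obtain ⟨rfl, rfl⟩ := hcc
      have hG01c := congrArg 𝒄 hG01
      simp only [_root_.map_add, _root_.map_mul, Complex.conj_conj, _root_.map_zero] at hG01c
      have := deg a1 a0 d1 d0 (by linear_combination hG11) (by linear_combination hG01c)
        (by linear_combination hG00) (by linear_combination h5)
      exact ha ⟨this.2, this.1⟩
    · -- Main case : a ≠ 0 and b ≠ 0 (as vectors)
      have hc : ¬(c0 = 0 ∧ c1 = 0) := by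
        rintro ⟨rfl, rfl⟩
        simp only [_root_.map_zero, zero_mul, zero_add, mul_zero, add_zero] at hR00 hR01 hR10 hR11
        have hd : d0 = 0 ∧ d1 = 0 := by
          rcases not_and_or.mp hb with hb' | hb'
          · exact ⟨(cz d0).mp ((mul_eq_zero.mp hR00).resolve_right hb'),
              (cz d1).mp ((mul_eq_zero.mp hR10).resolve_right hb')⟩
          · exact ⟨(cz d0).mp ((mul_eq_zero.mp hR01).resolve_right hb'),
              (cz d1).mp ((mul_eq_zero.mp hR11).resolve_right hb')⟩
        obtain ⟨rfl, rfl⟩ := hd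
        simp at hn2
      have hd : ¬(d0 = 0 ∧ d1 = 0) := by
        rintro ⟨rfl, rfl⟩
        simp only [_root_.map_zero, zero_mul, zero_add, mul_zero, add_zero] at hR00 hR01 hR10 hR11
        have hcc : c0 = 0 ∧ c1 = 0 := by
          rcases not_and_or.mp ha with ha' | ha'
          · exact ⟨(cz c0).mp ((mul_eq_zero.mp hR00).resolve_right ha'),
              (cz c1).mp ((mul_eq_zero.mp hR10).resolve_right ha')⟩
          · exact ⟨(cz c0).mp ((mul_eq_zero.mp hR01).resolve_right ha'),
              (cz c1).mp ((mul_eq_zero.mp hR11).resolve_right ha')⟩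
        obtain ⟨rfl, rfl⟩ := hcc
        simp at hn2
      -- determinants vanish
      have hDa : a0 * b1 - a1 * b0 = 0 := by
        rcases not_and_or.mp hc with hc' | hc'
        · have h' : 𝒄 c0 * (a0 * b1 - a1 * b0) = 0 := by
            linear_combination b1 * hR00 - b0 * hR01
          exact (mul_eq_zero.mp h').resolve_left (fun hh => hc' ((cz c0).mp hh))
        · have h' : 𝒄 c1 * (a0 * b1 - a1 * b0) = 0 := by
            linear_combination b1 * hR10 - b0 * hR11
          exact (mul_eq_zero.mp h').resolve_left (fun hh => hc' ((cz c1).mp hh))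
      have hR00c := congrArg 𝒄 hR00
      have hR01c := congrArg 𝒄 hR01
      have hR10c := congrArg 𝒄 hR10
      have hR11c := congrArg 𝒄 hR11
      simp only [_root_.map_add, _root_.map_mul, Complex.conj_conj, _root_.map_zero] at hR00c hR01c hR10c hR11c
      have hDc : c0 * d1 - c1 * d0 = 0 := by
        rcases not_and_or.mp ha with ha' | ha'
        · have h' : 𝒄 a0 * (c0 * d1 - c1 * d0) = 0 := by
            linear_combination d1 * hR00c - d0 * hR10c
          exact (mul_eq_zero.mp h').resolve_left (fun hh => ha' ((cz a0).mp hh))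
        · have h' : 𝒄 a1 * (c0 * d1 - c1 * d0) = 0 := by
            linear_combination d1 * hR01c - d0 * hR11c
          exact (mul_eq_zero.mp h').resolve_left (fun hh => ha' ((cz a1).mp hh))
      -- proportionality
      obtain ⟨α, hb0α, hb1α⟩ : ∃ x, b0 = x * a0 ∧ b1 = x * a1 := by
        by_cases ha0 : a0 = 0
        · have ha1 : a1 ≠ 0 := fun hh => ha ⟨ha0, hh⟩
          have hb0 : b0 = 0 := by
            have h' : a1 * b0 = 0 := by rw [ha0] at hDa; linear_combination -hDa
            exact (mul_eq_zero.mp h').resolve_left ha1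
          exact ⟨b1 / a1, by rw [hb0, ha0]; ring, by field_simp⟩
        · refine ⟨b0 / a0, by field_simp, ?_⟩
          field_simp
          linear_combination hDa
      obtain ⟨β, hd0β, hd1β⟩ : ∃ x, d0 = x * c0 ∧ d1 = x * c1 := by
        by_cases hc0 : c0 = 0
        · have hc1 : c1 ≠ 0 := fun hh => hc ⟨hc0, hh⟩
          have hd0 : d0 = 0 := by
            have h' : c1 * d0 = 0 := by rw [hc0] at hDc; linear_combination -hDc
            exact (mul_eq_zero.mp h').resolve_left hc1
          exact ⟨d1 / c1, by rw [hd0, hc0]; ring, by field_simp⟩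
        · refine ⟨d0 / c0, by field_simp, ?_⟩
          field_simp
          linear_combination hDc
      subst hb0α hb1α hd0β hd1β
      have hα : α ≠ 0 := by
        rintro rfl; exact hb ⟨zero_mul _, zero_mul _⟩
      simp only [_root_.map_mul] at hR00 hR01 hR10 hR11 h5 hG00 hG01 hG11 h10
      -- 1 + conj β * α = 0
      have hαβ : 1 + 𝒄 β * α = 0 := by
        have main : ∀ u v : ℂ, 𝒄 u * v + 𝒄 β * 𝒄 u * (α * v) = 0 → u ≠ 0 → v ≠ 0 →
            1 + 𝒄 β * α = 0 := by
          intro u v he hu hv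
          have h' : (𝒄 u * v) * (1 + 𝒄 β * α) = 0 := by linear_combination he
          rcases mul_eq_zero.mp h' with h'' | h''
          · rcases mul_eq_zero.mp h'' with h3 | h3
            · exact absurd ((cz u).mp h3) hu
            · exact absurd h3 hv
          · exact h''
        rcases not_and_or.mp hc with hc' | hc' <;> rcases not_and_or.mp ha with ha' | ha'
        · exact main c0 a0 (by linear_combination hR00) hc' ha'
        · exact main c0 a1 (by linear_combination hR01) hc' ha'
        · exact main c1 a0 (by linear_combination hR10) hc' ha'
        · exact main c1 a1 (by linear_combination hR11) hc' ha'
      -- Gram relations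
      have hG00' : (1 + 𝒄 α * α) * (𝒄 a0 * a0) = (1 + 𝒄 β * β) * (𝒄 c0 * c0) := by
        linear_combination hG00
      have hG01' : (1 + 𝒄 α * α) * (𝒄 a0 * a1) = (1 + 𝒄 β * β) * (𝒄 c0 * c1) := by
        linear_combination hG01
      have hG11' : (1 + 𝒄 α * α) * (𝒄 a1 * a1) = (1 + 𝒄 β * β) * (𝒄 c1 * c1) := by
        linear_combination hG11
      have hG01c := congrArg 𝒄 hG01'
      simp only [_root_.map_add, _root_.map_mul, _root_.map_one, Complex.conj_conj] at hG01c
      -- h5 consequence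
      have h5' : α * α * (𝒄 eta * (𝒄 c0 * a0) + eta * (𝒄 c1 * a1))
          = eta * (𝒄 c0 * a0) + 𝒄 eta * (𝒄 c1 * a1) := by
        linear_combination α * h5 - (eta * (𝒄 c0 * a0) + 𝒄 eta * (𝒄 c1 * a1)) * hαβ
      have k0 : (1 + 𝒄 β * β) * ((𝒄 c0 * a0) * (c0 * 𝒄 a0))
          = (1 + 𝒄 α * α) * ((𝒄 a0 * a0) * (𝒄 a0 * a0)) := by
        linear_combination -(a0 * 𝒄 a0) * hG00'
      have k1' : (1 + 𝒄 β * β) * ((𝒄 c1 * a1) * (c0 * 𝒄 a0))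
          = (1 + 𝒄 α * α) * ((𝒄 a1 * a1) * (𝒄 a0 * a0)) := by
        linear_combination -(a1 * 𝒄 a0) * hG01c
      have k1 : (1 + 𝒄 β * β) * ((𝒄 c0 * a0) * (c1 * 𝒄 a1))
          = (1 + 𝒄 α * α) * ((𝒄 a0 * a0) * (𝒄 a1 * a1)) := by
        linear_combination -(a0 * 𝒄 a1) * hG01'
      have k2 : (1 + 𝒄 β * β) * ((𝒄 c1 * a1) * (c1 * 𝒄 a1))
          = (1 + 𝒄 α * α) * ((𝒄 a1 * a1) * (𝒄 a1 * a1)) := by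
        linear_combination -(a1 * 𝒄 a1) * hG11'
      have key0 : ((1 + 𝒄 α * α) * (𝒄 a0 * a0)) *
          (α * α * (𝒄 eta * (𝒄 a0 * a0) + eta * (𝒄 a1 * a1))
            - (eta * (𝒄 a0 * a0) + 𝒄 eta * (𝒄 a1 * a1))) = 0 := by
        linear_combination ((1 + 𝒄 β * β) * (c0 * 𝒄 a0)) * h5'
          - (α * α * 𝒄 eta) * k0 - (α * α * eta) * k1' + eta * k0 + 𝒄 eta * k1'
      have key1 : ((1 + 𝒄 α * α) * (𝒄 a1 * a1)) *
          (α * α * (𝒄 eta * (𝒄 a0 * a0) + eta * (𝒄 a1 * a1))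
            - (eta * (𝒄 a0 * a0) + 𝒄 eta * (𝒄 a1 * a1))) = 0 := by
        linear_combination ((1 + 𝒄 β * β) * (c1 * 𝒄 a1)) * h5'
          - (α * α * 𝒄 eta) * k1 - (α * α * eta) * k2 + eta * k1 + 𝒄 eta * k2
      -- m ≠ 0
      have hmeq : (1 + 𝒄 α * α) = ((1 + Complex.normSq α : ℝ) : ℂ) := by
        rw [mul_comm, Complex.mul_conj]; push_cast; ring
      have hm : (1 + 𝒄 α * α) ≠ 0 := by
        rw [hmeq]
        exact_mod_cast Complex.ofReal_ne_zero.mpr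
          (by nlinarith [Complex.normSq_nonneg α])
      have hp' : 𝒄 a0 * a0 = ((Complex.normSq a0 : ℝ) : ℂ) := by
        rw [mul_comm, Complex.mul_conj]
      have hq' : 𝒄 a1 * a1 = ((Complex.normSq a1 : ℝ) : ℂ) := by
        rw [mul_comm, Complex.mul_conj]
      -- the key identity
      have hkey : α * α * (𝒄 eta * (𝒄 a0 * a0) + eta * (𝒄 a1 * a1))
          = eta * (𝒄 a0 * a0) + 𝒄 eta * (𝒄 a1 * a1) := by
        rcases not_and_or.mp ha with ha' | ha'
        · have hp : 𝒄 a0 * a0 ≠ 0 :=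
            mul_ne_zero (fun hh => ha' ((cz a0).mp hh)) ha'
          have := (mul_eq_zero.mp key0).resolve_left (mul_ne_zero hm hp)
          exact sub_eq_zero.mp this
        · have hq : 𝒄 a1 * a1 ≠ 0 :=
            mul_ne_zero (fun hh => ha' ((cz a1).mp hh)) ha'
          have := (mul_eq_zero.mp key1).resolve_left (mul_ne_zero hm hq)
          exact sub_eq_zero.mp this
      -- |alpha| = 1
      have hpq : ¬(Complex.normSq a0 = 0 ∧ Complex.normSq a1 = 0) := by
        rintro ⟨h1, h2⟩
        exact ha ⟨Complex.normSq_eq_zero.mp h1, Complex.normSq_eq_zero.mp h2⟩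
      have ht : 𝒄 eta * (𝒄 a0 * a0) + eta * (𝒄 a1 * a1) ≠ 0 := by
        rw [hp', hq']; exact eta_comb_ne _ _ hpq
      have htb : eta * (𝒄 a0 * a0) + 𝒄 eta * (𝒄 a1 * a1)
          = 𝒄 (𝒄 eta * (𝒄 a0 * a0) + eta * (𝒄 a1 * a1)) := by
        rw [hp', hq']
        simp only [_root_.map_add, _root_.map_mul, Complex.conj_conj, Complex.conj_ofReal]
      have hkey' : α * α * (𝒄 eta * (𝒄 a0 * a0) + eta * (𝒄 a1 * a1))
          = 𝒄 (𝒄 eta * (𝒄 a0 * a0) + eta * (𝒄 a1 * a1)) := hkey.trans htb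
      have hns := congrArg Complex.normSq hkey'
      simp only [Complex.normSq_mul, Complex.normSq_conj] at hns
      have hT0 : Complex.normSq (𝒄 eta * (𝒄 a0 * a0) + eta * (𝒄 a1 * a1)) ≠ 0 :=
        fun hh => ht (Complex.normSq_eq_zero.mp hh)
      have hα2 : Complex.normSq α * Complex.normSq α = 1 := by
        have := mul_right_cancel₀ hT0 (by rw [one_mul]; exact hns :
          Complex.normSq α * Complex.normSq α *
            Complex.normSq (𝒄 eta * (𝒄 a0 * a0) + eta * (𝒄 a1 * a1))
          = 1 * Complex.normSq (𝒄 eta * (𝒄 a0 * a0) + eta * (𝒄 a1 * a1)))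
        exact this
      have hα1 : Complex.normSq α = 1 := by nlinarith [Complex.normSq_nonneg α]
      have hαc : 𝒄 α * α = 1 := by
        rw [mul_comm, Complex.mul_conj, hα1, Complex.ofReal_one]
      have hαβc := congrArg 𝒄 hαβ
      simp only [_root_.map_add, _root_.map_mul, _root_.map_one, _root_.map_zero, Complex.conj_conj] at hαβc
      have hββ : 𝒄 β * β = 1 := by
        linear_combination (β * 𝒄 α) * hαβ - hαβc - (𝒄 β * β) * hαc
      have hcα : 𝒄 α ≠ 0 := fun hh => hα ((cz α).mp hh)
      have hβ2 : β = -α := by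
        have h' : (β + α) * 𝒄 α = 0 := by linear_combination hαβc + hαc
        have := (mul_eq_zero.mp h').resolve_right hcα
        exact eq_neg_of_add_eq_zero_left this
      have hβ2c : 𝒄 β = -𝒄 α := by rw [hβ2, _root_.map_neg]
      have hPp : 𝒄 c0 * c0 = 𝒄 a0 * a0 := by
        linear_combination (-1/2 : ℂ) * hG00' + (1/2 : ℂ) * (𝒄 a0 * a0) * hαc
          - (1/2 : ℂ) * (𝒄 c0 * c0) * hββ
      have hQq : 𝒄 c1 * c1 = 𝒄 a1 * a1 := by
        linear_combination (-1/2 : ℂ) * hG11' + (1/2 : ℂ) * (𝒄 a1 * a1) * hαc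
          - (1/2 : ℂ) * (𝒄 c1 * c1) * hββ
      have hz : α * (𝒄 eta * (𝒄 a0 * a0) + eta * (𝒄 a1 * a1))
          + 𝒄 α * (eta * (𝒄 a0 * a0) + 𝒄 eta * (𝒄 a1 * a1)) = 0 := by
        linear_combination (1/2 : ℂ) * h10
          + (1/2 : ℂ) * (𝒄 eta * (𝒄 c0 * c0) + eta * (𝒄 c1 * c1)) * hβ2
          + (1/2 : ℂ) * (eta * (𝒄 c0 * c0) + 𝒄 eta * (𝒄 c1 * c1)) * hβ2c
          - (1/2 : ℂ) * (α * 𝒄 eta + 𝒄 α * eta) * hPp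
          - (1/2 : ℂ) * (α * eta + 𝒄 α * 𝒄 eta) * hQq
      -- final contradiction
      have hsq : (α * (𝒄 eta * (𝒄 a0 * a0) + eta * (𝒄 a1 * a1))) ^ 2
          = (𝒄 eta * (𝒄 a0 * a0) + eta * (𝒄 a1 * a1))
            * (eta * (𝒄 a0 * a0) + 𝒄 eta * (𝒄 a1 * a1)) := by
        linear_combination (𝒄 eta * (𝒄 a0 * a0) + eta * (𝒄 a1 * a1)) * hkey
      have hneg : (α * (𝒄 eta * (𝒄 a0 * a0) + eta * (𝒄 a1 * a1)))
            * (𝒄 α * (eta * (𝒄 a0 * a0) + 𝒄 eta * (𝒄 a1 * a1)))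
          = -(α * (𝒄 eta * (𝒄 a0 * a0) + eta * (𝒄 a1 * a1))) ^ 2 := by
        linear_combination (α * (𝒄 eta * (𝒄 a0 * a0) + eta * (𝒄 a1 * a1))) * hz
      have hTT : (𝒄 eta * (𝒄 a0 * a0) + eta * (𝒄 a1 * a1))
            * (eta * (𝒄 a0 * a0) + 𝒄 eta * (𝒄 a1 * a1))
          = ((Complex.normSq (𝒄 eta * (𝒄 a0 * a0) + eta * (𝒄 a1 * a1)) : ℝ) : ℂ) := by
        rw [htb, Complex.mul_conj]
      have hzz : (α * (𝒄 eta * (𝒄 a0 * a0) + eta * (𝒄 a1 * a1)))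
            * (𝒄 α * (eta * (𝒄 a0 * a0) + 𝒄 eta * (𝒄 a1 * a1)))
          = ((Complex.normSq (α * (𝒄 eta * (𝒄 a0 * a0) + eta * (𝒄 a1 * a1))) : ℝ) : ℂ) := by
        rw [htb, ← _root_.map_mul, Complex.mul_conj]
      have hfin : ((Complex.normSq (α * (𝒄 eta * (𝒄 a0 * a0) + eta * (𝒄 a1 * a1))) : ℝ) : ℂ)
          = -((Complex.normSq (𝒄 eta * (𝒄 a0 * a0) + eta * (𝒄 a1 * a1)) : ℝ) : ℂ) := by
        rw [← hzz, ← hTT]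
        linear_combination hneg - hsq
      have hfinr : Complex.normSq (α * (𝒄 eta * (𝒄 a0 * a0) + eta * (𝒄 a1 * a1)))
          = -Complex.normSq (𝒄 eta * (𝒄 a0 * a0) + eta * (𝒄 a1 * a1)) := by
        exact_mod_cast hfin
      have h1 := Complex.normSq_nonneg (α * (𝒄 eta * (𝒄 a0 * a0) + eta * (𝒄 a1 * a1)))
      have h2 := Complex.normSq_nonneg (𝒄 eta * (𝒄 a0 * a0) + eta * (𝒄 a1 * a1))
      have : Complex.normSq (𝒄 eta * (𝒄 a0 * a0) + eta * (𝒄 a1 * a1)) = 0 := by linarith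
      exact hT0 this


/-- U = diag(η, conj η) ∈ M₂(ℂ). -/
noncomputable def U : Matrix (Fin 2) (Fin 2) ℂ := !![eta, 0; 0, star eta]

/-- L₀ ⊂ M₄(ℂ): block matrices [[A, λU*], [λU, A]], A ∈ M₂(ℂ), λ ∈ ℂ,
under the identification ℂ⁴ = ℂ² ⊕ ℂ². -/
noncomputable def L0 : Set (Matrix (Fin 4) (Fin 4) ℂ) :=
  {M | ∃ (A : Matrix (Fin 2) (Fin 2) ℂ) (l : ℂ),
    M = Matrix.reindex finSumFinEquiv finSumFinEquiv (Matrix.fromBlocks A (l • Uᴴ) (l • U) A)}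

lemma fse0 : (finSumFinEquiv.symm (0 : Fin (2+2)) : Fin 2 ⊕ Fin 2) = Sum.inl 0 := rfl
lemma fse1 : (finSumFinEquiv.symm (1 : Fin (2+2)) : Fin 2 ⊕ Fin 2) = Sum.inl 1 := rfl
lemma fse2 : (finSumFinEquiv.symm (2 : Fin (2+2)) : Fin 2 ⊕ Fin 2) = Sum.inr 0 := rfl
lemma fse3 : (finSumFinEquiv.symm (3 : Fin (2+2)) : Fin 2 ⊕ Fin 2) = Sum.inr 1 := rfl

lemma explicitM (A : Matrix (Fin 2) (Fin 2) ℂ) (l : ℂ) :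
    (Matrix.reindex finSumFinEquiv finSumFinEquiv
      (Matrix.fromBlocks A (l • Uᴴ) (l • U) A) : Matrix (Fin 4) (Fin 4) ℂ) =
    !![A 0 0, A 0 1, l * star eta, 0;
       A 1 0, A 1 1, 0, l * eta;
       l * eta, 0, A 0 0, A 0 1;
       0, l * star eta, A 1 0, A 1 1] := by
  ext i j
  fin_cases i <;> fin_cases j <;>
    simp [U, Matrix.fromBlocks, fse0, fse1, fse2, fse3, Matrix.conjTranspose_apply]

lemma inner_L0 (A : Matrix (Fin 2) (Fin 2) ℂ) (l : ℂ) (ψ φ : Fin 4 → ℂ) :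
    star ψ ⬝ᵥ ((Matrix.reindex finSumFinEquiv finSumFinEquiv
      (Matrix.fromBlocks A (l • Uᴴ) (l • U) A) : Matrix (Fin 4) (Fin 4) ℂ)).mulVec φ =
    A 0 0 * (𝒄 (ψ 0) * φ 0 + 𝒄 (ψ 2) * φ 2) +
    A 0 1 * (𝒄 (ψ 0) * φ 1 + 𝒄 (ψ 2) * φ 3) +
    A 1 0 * (𝒄 (ψ 1) * φ 0 + 𝒄 (ψ 3) * φ 2) +
    A 1 1 * (𝒄 (ψ 1) * φ 1 + 𝒄 (ψ 3) * φ 3) +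
    l * (𝒄 (ψ 0) * 𝒄 eta * φ 2 + 𝒄 (ψ 1) * eta * φ 3 +
         𝒄 (ψ 2) * eta * φ 0 + 𝒄 (ψ 3) * 𝒄 eta * φ 1) := by
  rw [explicitM]
  simp [Matrix.mulVec, dotProduct, Fin.sum_univ_four]
  ring

/-- There do not exist unit vectors φ, ψ ∈ ℂ⁴ such that ⟨ψ, Mφ⟩ = 0 and
⟨φ, Mφ⟩ = ⟨ψ, Mψ⟩ for every M ∈ L₀. -/
theorem no_superactivating_pair_for_L0 :
    ¬ ∃ (φ ψ : Fin 4 → ℂ), star φ ⬝ᵥ φ = 1 ∧ star ψ ⬝ᵥ ψ = 1 ∧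
      ∀ M ∈ L0, star ψ ⬝ᵥ M.mulVec φ = 0 ∧
        star φ ⬝ᵥ M.mulVec φ = star ψ ⬝ᵥ M.mulVec ψ := by
  rintro ⟨φ, ψ, hφn, hψn, h⟩
  simp only [dotProduct, Fin.sum_univ_four, Pi.star_apply, Complex.star_def] at hφn hψn
  have h1 := h _ ⟨!![(1:ℂ),0;0,0], 0, rfl⟩
  have h2 := h _ ⟨!![(0:ℂ),1;0,0], 0, rfl⟩
  have h3 := h _ ⟨!![(0:ℂ),0;1,0], 0, rfl⟩
  have h4 := h _ ⟨!![(0:ℂ),0;0,1], 0, rfl⟩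
  have h5 := h _ ⟨!![(0:ℂ),0;0,0], 1, rfl⟩
  simp only [inner_L0] at h1 h2 h3 h4 h5
  norm_num [Matrix.cons_val_zero, Matrix.cons_val_one, Matrix.head_cons] at h1 h2 h3 h4 h5
  exact core (φ 0) (φ 1) (φ 2) (φ 3) (ψ 0) (ψ 1) (ψ 2) (ψ 3)
    (by linear_combination hφn) (by linear_combination hψn)
    (by linear_combination h1.1) (by linear_combination h2.1)
    (by linear_combination h3.1) (by linear_combination h4.1)
    (by linear_combination h5.1)
    (by linear_combination h1.2) (by linear_combination h2.2)
    (by linear_combination h4.2) (by linear_combination h5.2)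
end

section
/- For every t ∈ [0, 2π) and all M₁, M₂ ∈ L₀, one has ⟨ψ_t, (M₁ ⊗ M₂) ψ_t⟩ = ⟨φ_t, (M₁ ⊗ M₂) φ_t⟩. -/
open Matrix Kronecker Real

/-- φ_t = (|1⟩⊗|1⟩ + e^{it}|2⟩⊗|2⟩)/√2 ∈ ℂ⁴ ⊗ ℂ⁴, the tensor square being modelled as
functions on (Fin 4) × (Fin 4). -/
noncomputable def phiT (t : ℝ) : Fin 4 × Fin 4 → ℂ := fun p =>
  ((if p = (0, 0) then 1 else 0) +
    Complex.exp (t * Complex.I) * (if p = (1, 1) then 1 else 0)) / Real.sqrt 2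

/-- ψ_t = (|3⟩⊗|3⟩ + e^{it}|4⟩⊗|4⟩)/√2 ∈ ℂ⁴ ⊗ ℂ⁴. -/
noncomputable def psiT (t : ℝ) : Fin 4 × Fin 4 → ℂ := fun p =>
  ((if p = (2, 2) then 1 else 0) +
    Complex.exp (t * Complex.I) * (if p = (3, 3) then 1 else 0)) / Real.sqrt 2

/-! Both quadratic forms only see the entries of `M₁ ⊗ₖ M₂` between two basis vectors: for `ψ_t`
those come from the lower-right diagonal blocks of `M₁` and `M₂`, for `φ_t` from the upper-left
ones, and for a matrix of `L₀` both diagonal blocks are the same `A`. -/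

theorem L0_apply_natAdd_natAdd {M : Matrix (Fin 4) (Fin 4) ℂ} (hM : M ∈ L0) (i j : Fin 2) :
    M (Fin.natAdd 2 i) (Fin.natAdd 2 j) = M (Fin.castAdd 2 i) (Fin.castAdd 2 j) := by
  obtain ⟨A, l, rfl⟩ := hM
  simp only [reindex_apply, submatrix_apply, finSumFinEquiv_symm_apply_natAdd,
    finSumFinEquiv_symm_apply_castAdd, fromBlocks_apply₁₁, fromBlocks_apply₂₂]

theorem L0_lower_right_eq_upper_left {M : Matrix (Fin 4) (Fin 4) ℂ} (hM : M ∈ L0) :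
    M 2 2 = M 0 0 ∧ M 2 3 = M 0 1 ∧ M 3 2 = M 1 0 ∧ M 3 3 = M 1 1 :=
  ⟨L0_apply_natAdd_natAdd hM 0 0, L0_apply_natAdd_natAdd hM 0 1, L0_apply_natAdd_natAdd hM 1 0,
    L0_apply_natAdd_natAdd hM 1 1⟩

theorem star_single_add_single_dotProduct_mulVec {ι R : Type*} [Fintype ι] [DecidableEq ι]
    [CommSemiring R] [StarRing R] (N : Matrix ι ι R) (a b : ι) (x y : R) :
    star (Pi.single a x + Pi.single b y) ⬝ᵥ N *ᵥ (Pi.single a x + Pi.single b y) =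
      star x * N a a * x + star x * N a b * y + star y * N b a * x + star y * N b b * y := by
  simp only [star_add, Pi.star_single, mulVec_add, mulVec_single, add_dotProduct, dotProduct_add,
    single_dotProduct, Pi.smul_apply, col_apply, MulOpposite.smul_eq_mul_unop, MulOpposite.unop_op]
  ring

theorem phiT_eq_single_add_single (t : ℝ) :
    phiT t = Pi.single (0, 0) (1 / √2) + Pi.single (1, 1) (Complex.exp (t * Complex.I) / √2) := by
  ext p
  simp [phiT, Pi.single_apply, add_div, ite_div]

theorem psiT_eq_single_add_single (t : ℝ) :
    psiT t = Pi.single (2, 2) (1 / √2) + Pi.single (3, 3) (Complex.exp (t * Complex.I) / √2) := by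
  ext p
  simp [psiT, Pi.single_apply, add_div, ite_div]

theorem psi_inner_kron_psi_eq_phi_inner_kron_phi_general (t : ℝ)
    (M₁ M₂ : Matrix (Fin 4) (Fin 4) ℂ) (hM₁ : M₁ ∈ L0) (hM₂ : M₂ ∈ L0) :
    star (psiT t) ⬝ᵥ (M₁ ⊗ₖ M₂).mulVec (psiT t) = star (phiT t) ⬝ᵥ (M₁ ⊗ₖ M₂).mulVec (phiT t) := by
  obtain ⟨h₁₁, h₁₂, h₁₃, h₁₄⟩ := L0_lower_right_eq_upper_left hM₁
  obtain ⟨h₂₁, h₂₂, h₂₃, h₂₄⟩ := L0_lower_right_eq_upper_left hM₂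
  rw [psiT_eq_single_add_single, phiT_eq_single_add_single,
    star_single_add_single_dotProduct_mulVec, star_single_add_single_dotProduct_mulVec]
  simp only [kroneckerMap_apply, h₁₁, h₁₂, h₁₃, h₁₄, h₂₁, h₂₂, h₂₃, h₂₄]

/-- For every t ∈ [0, 2π) and all M₁, M₂ ∈ L₀, ⟨ψ_t, (M₁ ⊗ M₂)ψ_t⟩ = ⟨φ_t, (M₁ ⊗ M₂)φ_t⟩. -/
theorem psi_inner_kron_psi_eq_phi_inner_kron_phi (t : ℝ) (ht : t ∈ Set.Ico 0 (2 * π))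
    (M₁ M₂ : Matrix (Fin 4) (Fin 4) ℂ) (hM₁ : M₁ ∈ L0) (hM₂ : M₂ ∈ L0) :
    star (psiT t) ⬝ᵥ (M₁ ⊗ₖ M₂).mulVec (psiT t) = star (phiT t) ⬝ᵥ (M₁ ⊗ₖ M₂).mulVec (phiT t) :=
  psi_inner_kron_psi_eq_phi_inner_kron_phi_general t M₁ M₂ hM₁ hM₂
end

section
/- With V_k = Σ_{i=1}^d ⟨k|ψ_i⟩ W_i A_i^{1/2} for k = 1, ..., m, one has Σ_{k=1}^m V_k* V_k = I_n, and the linear span of the matrices {V_k* V_l : k, l = 1, ..., m} equals the linear span of {A_i : i = 1, ..., d}. -/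
/-! Each `W_i` is a partial isometry with initial space `Ran A_i = Ran A_i^{1/2}`, so
`(W_i A_i^{1/2})* (W_i A_i^{1/2}) = A_i`, and the final spaces are mutually orthogonal; hence
`V_k* V_l = ∑ i, conj ⟨k|ψ_i⟩ ⟨l|ψ_i⟩ A_i`. Taking `k = l` and summing, `‖ψ_i‖ = 1` turns this
into `∑ i, A_i = I`. The coefficient vectors `(conj ⟨k|ψ_i⟩ ⟨l|ψ_i⟩)_{k,l}` are the entries of
the linearly independent `|ψ_i⟩⟨ψ_i|`, so some combination of the `V_k* V_l` isolates each `A_j`. -/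

open Matrix ComplexOrder

/-- The square root of a positive semidefinite matrix, as defined in Mathlib (December 2024). -/
noncomputable def Matrix.PosSemidef.sqrt {n 𝕜 : Type*} [Fintype n] [DecidableEq n] [RCLike 𝕜]
    {A : Matrix n n 𝕜} (hA : A.PosSemidef) : Matrix n n 𝕜 :=
  hA.1.eigenvectorUnitary.1 * diagonal ((↑) ∘ (√·) ∘ hA.1.eigenvalues) *
    (star hA.1.eigenvectorUnitary : Matrix n n 𝕜)

namespace Matrix.PosSemidef

variable {n 𝕜 : Type*} [Fintype n] [DecidableEq n] [RCLike 𝕜] {A : Matrix n n 𝕜}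

theorem isHermitian_sqrt (hA : A.PosSemidef) : hA.sqrt.IsHermitian := by
  simp [sqrt, IsHermitian, conjTranspose_mul, star_eq_conjTranspose, diagonal_conjTranspose,
    Matrix.mul_assoc]
  congr 3
  funext i
  simp

theorem sqrt_mul_self (hA : A.PosSemidef) : hA.sqrt * hA.sqrt = A := by
  conv_rhs => rw [hA.1.spectral_theorem, Unitary.conjStarAlgAut_apply]
  simp only [sqrt, Matrix.mul_assoc]
  rw [← Matrix.mul_assoc (star _ : Matrix n n 𝕜) _, Unitary.coe_star_mul_self, Matrix.one_mul,
    ← Matrix.mul_assoc (diagonal _), diagonal_mul_diagonal]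
  congr 3
  funext i
  simp [← RCLike.ofReal_mul, Real.mul_self_sqrt (hA.eigenvalues_nonneg i)]

theorem isSelfAdjoint_toEuclideanCLM_sqrt (hA : A.PosSemidef) :
    IsSelfAdjoint (toEuclideanCLM (𝕜 := 𝕜) hA.sqrt) :=
  (isHermitian_iff_isSelfAdjoint.mp hA.isHermitian_sqrt).map _

theorem toEuclideanCLM_sqrt_comp_self (hA : A.PosSemidef) :
    toEuclideanCLM (𝕜 := 𝕜) hA.sqrt ∘L toEuclideanCLM (𝕜 := 𝕜) hA.sqrt =
      toEuclideanCLM (𝕜 := 𝕜) A := by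
  rw [← ContinuousLinearMap.mul_def, ← map_mul, hA.sqrt_mul_self]

end Matrix.PosSemidef

open ContinuousLinearMap

section

variable {𝕜 E F : Type*} [RCLike 𝕜] [NormedAddCommGroup E] [InnerProductSpace 𝕜 E]
  [NormedAddCommGroup F] [InnerProductSpace 𝕜 F] [CompleteSpace E] [CompleteSpace F]

theorem ContinuousLinearMap.adjoint_sum_smul_comp_sum_smul {ι : Type*} [Fintype ι]
    {X : ι → E →L[𝕜] F} (hX : Pairwise fun i j => adjoint (X i) ∘L X j = 0) (a b : ι → 𝕜) :
    adjoint (∑ i, a i • X i) ∘L ∑ j, b j • X j =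
      ∑ i, (star (a i) * b i) • (adjoint (X i) ∘L X i) := by
  simp only [map_sum, LinearIsometryEquiv.map_smulₛₗ, finsetSum_comp, comp_finsetSum, smul_comp,
    comp_smul]
  refine Finset.sum_congr rfl fun i _ => ?_
  rw [Finset.sum_eq_single i (fun j _ hji => by rw [hX hji, smul_zero]) (by simp), smul_smul,
    mul_comm]
  rfl

variable [FiniteDimensional 𝕜 E]

theorem IsSelfAdjoint.range_comp_self {T : E →L[𝕜] E} (hT : IsSelfAdjoint T) :
    LinearMap.range (T ∘L T : E →ₗ[𝕜] E) = LinearMap.range (T : E →ₗ[𝕜] E) := by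
  have hT' : (T : E →ₗ[𝕜] E).adjoint = T :=
    LinearMap.isSelfAdjoint_iff'.mp ((LinearMap.isSymmetric_iff_isSelfAdjoint _).mp hT.isSymmetric)
  simpa [hT'] using LinearMap.range_self_comp_adjoint (T : E →ₗ[𝕜] E)

theorem IsSelfAdjoint.adjoint_comp_self_of_adjoint_comp_self_eq_starProjection {T : E →L[𝕜] E}
    (hT : IsSelfAdjoint T) {W : E →L[𝕜] F}
    (hW : adjoint W ∘L W = (LinearMap.range (T ∘L T : E →ₗ[𝕜] E)).starProjection) :
    adjoint (W ∘L T) ∘L (W ∘L T) = T ∘L T := by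
  have hproj : (LinearMap.range (T ∘L T : E →ₗ[𝕜] E)).starProjection ∘L T = T := by
    ext x
    rw [ContinuousLinearMap.comp_apply, Submodule.starProjection_eq_self_iff, hT.range_comp_self]
    exact LinearMap.mem_range_self _ x
  rw [adjoint_comp, hT.adjoint_eq, comp_assoc, ← comp_assoc _ W, hW, hproj]

theorem adjoint_sum_smul_comp_sum_smul_of_starProjection {ι : Type*} [Fintype ι]
    {S T : ι → E →L[𝕜] E} (hT : ∀ i, IsSelfAdjoint (T i)) (hTS : ∀ i, T i ∘L T i = S i)
    {W : ι → E →L[𝕜] F}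
    (hW : ∀ i, adjoint (W i) ∘L W i = (LinearMap.range (S i : E →ₗ[𝕜] E)).starProjection)
    (hWorth : Pairwise fun i j => adjoint (W i) ∘L W j = 0) (a b : ι → 𝕜) :
    adjoint (∑ i, a i • (W i ∘L T i)) ∘L ∑ j, b j • (W j ∘L T j) =
      ∑ i, (star (a i) * b i) • S i := by
  obtain rfl : S = fun i => T i ∘L T i := funext fun i => (hTS i).symm
  have horth : Pairwise fun i j => adjoint (W i ∘L T i) ∘L (W j ∘L T j) = 0 := fun i j hij => by
    dsimp only
    rw [adjoint_comp, comp_assoc, ← comp_assoc _ (W j), hWorth hij, zero_comp, comp_zero]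
  simp only [adjoint_sum_smul_comp_sum_smul horth,
    (hT _).adjoint_comp_self_of_adjoint_comp_self_eq_starProjection (hW _)]

end

section

variable {K M ι κ : Type*} [Field K] [AddCommGroup M] [Module K M] [Fintype ι] [Fintype κ]

theorem LinearIndependent.exists_dotProduct_eq_ite [DecidableEq ι] {u : ι → κ → K}
    (hu : LinearIndependent K u) (j : ι) :
    ∃ w : κ → K, ∀ i, u i ⬝ᵥ w = if j = i then 1 else 0 := by
  classical
  obtain ⟨g, hg⟩ := (Fintype.linearCombination K u).exists_leftInverse_of_injective
    (LinearMap.ker_eq_bot.mpr (linearIndependent_iff_injective_fintypeLinearCombination.mp hu))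
  -- `w` is the `j`-th row of a left inverse of `c ↦ ∑ i, c i • u i`.
  refine ⟨fun c => g (fun c' => if c = c' then 1 else 0) j, fun i => ?_⟩
  have hgu : g (u i) = Pi.single i 1 := by
    simpa using congr($hg (Pi.single i (1 : K)))
  have := congr_fun (g.pi_apply_eq_sum_univ (u i)) j
  simp_all [dotProduct, Pi.single_apply]

theorem span_range_sum_smul_eq_of_linearIndependent (B : ι → M) {u : ι → κ → K}
    (hu : LinearIndependent K u) :
    Submodule.span K (Set.range fun c => ∑ i, u i c • B i) = Submodule.span K (Set.range B) := by
  classical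
  refine le_antisymm (Submodule.span_le.mpr ?_) (Submodule.span_le.mpr ?_)
  · rintro _ ⟨c, rfl⟩
    exact Submodule.sum_mem _ fun i _ => Submodule.smul_mem _ _ (Submodule.subset_span ⟨i, rfl⟩)
  · rintro _ ⟨j, rfl⟩
    obtain ⟨w, hw⟩ := hu.exists_dotProduct_eq_ite j
    have hB : ∑ c, w c • ∑ i, u i c • B i = B j := by
      simp_rw [Finset.smul_sum, smul_smul]
      rw [Finset.sum_comm]
      simp_rw [← Finset.sum_smul, mul_comm (w _)]
      simp [← dotProduct.eq_def, hw]
    rw [← hB]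
    exact Submodule.sum_mem _ fun c _ => Submodule.smul_mem _ _ (Submodule.subset_span ⟨c, rfl⟩)

end

theorem linearIndependent_star_mul_of_linearIndependent_vecMulVec {R ι κ : Type*} [CommRing R]
    [Star R] [Fintype ι] {u : ι → κ → R}
    (hu : LinearIndependent R fun i => vecMulVec (u i) (star (u i))) :
    LinearIndependent R fun i (p : κ × κ) => star (u i p.1) * u i p.2 := by
  rw [Fintype.linearIndependent_iff] at hu ⊢
  intro g hg
  refine hu g (ext fun k l => ?_)
  simpa [Matrix.sum_apply, vecMulVec_apply, mul_comm] using congr_fun hg (l, k)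

theorem EuclideanSpace.sum_star_mul_self {𝕜 ι : Type*} [RCLike 𝕜] [Fintype ι]
    (x : EuclideanSpace 𝕜 ι) : ∑ k, star (x k) * x k = (‖x‖ : 𝕜) ^ 2 := by
  rw [← inner_self_eq_norm_sq_to_K, EuclideanSpace.inner_eq_star_dotProduct, dotProduct]
  simp [mul_comm]

theorem kraus_operators_of_noncommutative_graph_general
    (n d m : ℕ)
    (A : Fin d → Matrix (Fin n) (Fin n) ℂ)
    (hA : ∀ i, (A i).PosSemidef)
    (hAsum : ∑ i, A i = 1)
    (ψ : Fin d → EuclideanSpace ℂ (Fin m))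
    (hψ : ∀ i, ‖ψ i‖ = 1)
    (hψind : LinearIndependent ℂ fun i => vecMulVec (ψ i) (star (ψ i)))
    (HB : Type*) [NormedAddCommGroup HB] [InnerProductSpace ℂ HB] [CompleteSpace HB]
    (W : Fin d → EuclideanSpace ℂ (Fin n) →L[ℂ] HB)
    (hW : ∀ i, (ContinuousLinearMap.adjoint (W i)).comp (W i) =
      (LinearMap.range ((Matrix.toEuclideanCLM (𝕜 := ℂ) (A i) :
          EuclideanSpace ℂ (Fin n) →ₗ[ℂ] EuclideanSpace ℂ (Fin n)))).subtypeL.comp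
        (Submodule.orthogonalProjectionOnto (LinearMap.range ((Matrix.toEuclideanCLM (𝕜 := ℂ) (A i) :
          EuclideanSpace ℂ (Fin n) →ₗ[ℂ] EuclideanSpace ℂ (Fin n))))))
    (hWorth : ∀ i j, i ≠ j → (ContinuousLinearMap.adjoint (W i)).comp (W j) = 0)
    (V : Fin m → EuclideanSpace ℂ (Fin n) →L[ℂ] HB)
    (hV : ∀ k, V k = ∑ i, ψ i k •
      (W i).comp (Matrix.toEuclideanCLM (𝕜 := ℂ) ((hA i).sqrt))) :
    (∑ k, (ContinuousLinearMap.adjoint (V k)).comp (V k)) = ContinuousLinearMap.id ℂ _ ∧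
    Submodule.span ℂ
        {T : EuclideanSpace ℂ (Fin n) →L[ℂ] EuclideanSpace ℂ (Fin n) |
          ∃ k l, T = (ContinuousLinearMap.adjoint (V k)).comp (V l)} =
      Submodule.span ℂ (Set.range fun i => Matrix.toEuclideanCLM (𝕜 := ℂ) (A i)) := by
  have key : ∀ k l, adjoint (V k) ∘L V l =
      ∑ i, (star (ψ i k) * ψ i l) • toEuclideanCLM (𝕜 := ℂ) (A i) := fun k l => by
    rw [hV, hV]
    exact adjoint_sum_smul_comp_sum_smul_of_starProjection
      (fun i => (hA i).isSelfAdjoint_toEuclideanCLM_sqrt)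
      (fun i => (hA i).toEuclideanCLM_sqrt_comp_self) hW hWorth _ _
  refine ⟨?_, ?_⟩
  · calc ∑ k, adjoint (V k) ∘L V k
        = ∑ i, (∑ k, star (ψ i k) * ψ i k) • toEuclideanCLM (𝕜 := ℂ) (A i) := by
          simp only [key]
          rw [Finset.sum_comm]
          exact Finset.sum_congr rfl fun i _ => Finset.sum_smul.symm
      _ = toEuclideanCLM (𝕜 := ℂ) (∑ i, A i) := by
          rw [map_sum]
          refine Finset.sum_congr rfl fun i _ => ?_
          rw [EuclideanSpace.sum_star_mul_self, hψ]
          simp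
      _ = ContinuousLinearMap.id ℂ _ := by rw [hAsum, map_one]; rfl
  · rw [← span_range_sum_smul_eq_of_linearIndependent _
      (linearIndependent_star_mul_of_linearIndependent_vecMulVec hψind)]
    congr 1
    ext T
    simp [key, eq_comm]

/-- Kraus operators built from a positive basis of a noncommutative graph:
with `V k = ∑ i ⟨k|ψ_i⟩ W_i A_i^{1/2}` one has `∑ k V_k* V_k = I` and
`span {V_k* V_l} = span {A_i}`. -/
theorem kraus_operators_of_noncommutative_graph
    (n d m : ℕ) (hdm : d ≤ m ^ 2)
    (A : Fin d → Matrix (Fin n) (Fin n) ℂ)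
    (hA : ∀ i, (A i).PosSemidef)
    (hAsum : ∑ i, A i = 1)
    (ψ : Fin d → EuclideanSpace ℂ (Fin m))
    (hψ : ∀ i, ‖ψ i‖ = 1)
    (hψind : LinearIndependent ℂ fun i => vecMulVec (ψ i) (star (ψ i)))
    (HB : Type*) [NormedAddCommGroup HB] [InnerProductSpace ℂ HB] [CompleteSpace HB]
    (W : Fin d → EuclideanSpace ℂ (Fin n) →L[ℂ] HB)
    (hW : ∀ i, (ContinuousLinearMap.adjoint (W i)).comp (W i) =
      (LinearMap.range ((Matrix.toEuclideanCLM (𝕜 := ℂ) (A i) :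
          EuclideanSpace ℂ (Fin n) →ₗ[ℂ] EuclideanSpace ℂ (Fin n)))).subtypeL.comp
        (Submodule.orthogonalProjectionOnto (LinearMap.range ((Matrix.toEuclideanCLM (𝕜 := ℂ) (A i) :
          EuclideanSpace ℂ (Fin n) →ₗ[ℂ] EuclideanSpace ℂ (Fin n))))))
    (hWorth : ∀ i j, i ≠ j → (ContinuousLinearMap.adjoint (W i)).comp (W j) = 0)
    (V : Fin m → EuclideanSpace ℂ (Fin n) →L[ℂ] HB)
    (hV : ∀ k, V k = ∑ i, ψ i k •
      (W i).comp (Matrix.toEuclideanCLM (𝕜 := ℂ) ((hA i).sqrt))) :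
    (∑ k, (ContinuousLinearMap.adjoint (V k)).comp (V k)) = ContinuousLinearMap.id ℂ _ ∧
    Submodule.span ℂ
        {T : EuclideanSpace ℂ (Fin n) →L[ℂ] EuclideanSpace ℂ (Fin n) |
          ∃ k l, T = (ContinuousLinearMap.adjoint (V k)).comp (V l)} =
      Submodule.span ℂ (Set.range fun i => Matrix.toEuclideanCLM (𝕜 := ℂ) (A i)) :=
  kraus_operators_of_noncommutative_graph_general n d m A hA hAsum ψ hψ hψind HB W hW hWorth V hV
end

section
/- Let n ≥ 2 and let x₁, ..., x_n, y₁, ..., y_n ∈ ℂ² satisfy: (a) Σ_{i=1}^n ⟨y_i, A x_i⟩ = 0 for every A ∈ M₂(ℂ); (b) ⟨y_i, U* x_k⟩ = 0 whenever i < k; (c) ⟨y_i, U x_k⟩ = 0 whenever i > k; (d) Σ_{i=1}^n |y_i⟩⟨y_i| = Σ_{i=1}^n |x_i⟩⟨x_i|. Then either every pair x_i, x_j is linearly dependent, or every pair y_i, y_j is linearly dependent. -/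
open Matrix

private lemma det_ne_zero_of_li (u v : Fin 2 → ℂ) (h : LinearIndependent ℂ ![u, v]) :
    u 0 * v 1 - u 1 * v 0 ≠ 0 := by
  intro hdet
  have h1 := (LinearIndependent.pair_iff.mp h (v 1) (-(u 1))) (by
    funext i; fin_cases i <;> simp <;>
      first | linear_combination hdet | linear_combination -hdet | ring)
  have h2 := (LinearIndependent.pair_iff.mp h (v 0) (-(u 0))) (by
    funext i; fin_cases i <;> simp <;>
      first | linear_combination hdet | linear_combination -hdet | ring)
  have h3 := (LinearIndependent.pair_iff.mp h 1 0) (by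
    funext i; fin_cases i <;> simp [neg_eq_zero.mp h1.2, neg_eq_zero.mp h2.2, h1.1, h2.1])
  exact one_ne_zero h3.1

private lemma solve2 {p q a0 a1 b0 b1 : ℂ} (h1 : p * a0 + q * a1 = 0) (h2 : p * b0 + q * b1 = 0)
    (hdet : a0 * b1 - a1 * b0 ≠ 0) : p = 0 ∧ q = 0 := by
  constructor
  · have : p * (a0 * b1 - a1 * b0) = 0 := by linear_combination b1 * h1 - a1 * h2
    exact (mul_eq_zero.mp this).resolve_right hdet
  · have : q * (a0 * b1 - a1 * b0) = 0 := by linear_combination -b0 * h1 + a0 * h2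
    exact (mul_eq_zero.mp this).resolve_right hdet

private lemma dotU (v w : Fin 2 → ℂ) : star v ⬝ᵥ U.mulVec w =
    (starRingEnd ℂ) (v 0) * (eta * w 0) + (starRingEnd ℂ) (v 1) * (star eta * w 1) := by
  simp [U, Matrix.mulVec, dotProduct, Fin.sum_univ_two]

private lemma dotUc (v w : Fin 2 → ℂ) : star v ⬝ᵥ Uᴴ.mulVec w =
    (starRingEnd ℂ) (v 0) * (star eta * w 0) + (starRingEnd ℂ) (v 1) * (eta * w 1) := by
  simp [U, Matrix.mulVec, dotProduct, Fin.sum_univ_two, Matrix.conjTranspose_apply]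

/-- If x₁,...,x_n, y₁,...,y_n ∈ ℂ² satisfy (a) Σᵢ⟨yᵢ, Axᵢ⟩ = 0 for all A ∈ M₂(ℂ),
(b) ⟨yᵢ, U*x_k⟩ = 0 for i < k, (c) ⟨yᵢ, Ux_k⟩ = 0 for i > k, and
(d) Σᵢ|yᵢ⟩⟨yᵢ| = Σᵢ|xᵢ⟩⟨xᵢ|, then either all pairs xᵢ, xⱼ are linearly dependent or
all pairs yᵢ, yⱼ are linearly dependent. -/
theorem pairwise_dependent_of_relations (n : ℕ) (hn : 2 ≤ n)
    (x y : Fin n → (Fin 2 → ℂ))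
    (ha : ∀ A : Matrix (Fin 2) (Fin 2) ℂ, ∑ i, star (y i) ⬝ᵥ A.mulVec (x i) = 0)
    (hb : ∀ i k : Fin n, (i : ℕ) < (k : ℕ) → star (y i) ⬝ᵥ Uᴴ.mulVec (x k) = 0)
    (hc : ∀ i k : Fin n, (k : ℕ) < (i : ℕ) → star (y i) ⬝ᵥ U.mulVec (x k) = 0)
    (hd : ∑ i, vecMulVec (y i) (star (y i)) = ∑ i, vecMulVec (x i) (star (x i))) :
    (∀ i j, ¬ LinearIndependent ℂ ![x i, x j]) ∨
    (∀ i j, ¬ LinearIndependent ℂ ![y i, y j]) := by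
  by_contra hcon
  push_neg at hcon
  obtain ⟨⟨i, j, hxij⟩, ⟨p, q, hypq⟩⟩ := hcon
  have hdx := det_ne_zero_of_li _ _ hxij
  have hdy := det_ne_zero_of_li _ _ hypq
  have he : eta ≠ 0 := Complex.exp_ne_zero _
  have hes : star eta ≠ 0 := by rw [star_ne_zero]; exact he
  -- get ordered independent pair of x's
  obtain ⟨k1, k2, hlt, hk⟩ : ∃ k1 k2 : Fin n, (k1 : ℕ) < (k2 : ℕ) ∧
      x k1 0 * x k2 1 - x k1 1 * x k2 0 ≠ 0 := by
    rcases lt_trichotomy (i : ℕ) (j : ℕ) with h | h | h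
    · exact ⟨i, j, h, hdx⟩
    · exact absurd (by rw [show j = i from (Fin.ext h).symm]; ring) hdx
    · exact ⟨j, i, h, fun h0 => hdx (by linear_combination -h0)⟩
  have hne : k1 ≠ k2 := fun hh => absurd (congrArg Fin.val hh) (Nat.ne_of_lt hlt)
  -- rewritten conditions
  have hb' : ∀ i k : Fin n, (i : ℕ) < (k : ℕ) →
      (starRingEnd ℂ) (y i 0) * (star eta * x k 0) + (starRingEnd ℂ) (y i 1) * (eta * x k 1) = 0 :=
    fun i k h => by rw [← dotUc]; exact hb i k h
  have hc' : ∀ i k : Fin n, (k : ℕ) < (i : ℕ) →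
      (starRingEnd ℂ) (y i 0) * (eta * x k 0) + (starRingEnd ℂ) (y i 1) * (star eta * x k 1) = 0 :=
    fun i k h => by rw [← dotU]; exact hc i k h
  have ha' : ∀ a b : Fin 2, ∑ m, (starRingEnd ℂ) (y m a) * x m b = 0 := by
    intro a b
    have := ha (Matrix.single a b 1)
    fin_cases a <;> fin_cases b <;>
      simpa [Matrix.mulVec, dotProduct, Fin.sum_univ_two, Matrix.single] using this
  have hd' : ∀ a b : Fin 2,
      ∑ m, y m a * (starRingEnd ℂ) (y m b) = ∑ m, x m a * (starRingEnd ℂ) (x m b) := by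
    intro a b
    have := congrFun (congrFun hd a) b
    simpa [Matrix.sum_apply, Matrix.vecMulVec_apply] using this
  have hxk1 : ¬ (x k1 0 = 0 ∧ x k1 1 = 0) := by
    rintro ⟨e0, e1⟩; exact hk (by rw [e0, e1]; ring)
  have hxk2 : ¬ (x k2 0 = 0 ∧ x k2 1 = 0) := by
    rintro ⟨e0, e1⟩; exact hk (by rw [e0, e1]; ring)
  have hdUU : ∀ d : ℂ, eta * star eta * d = 0 → d = 0 := by
    intro d hdd
    rcases mul_eq_zero.mp hdd with h | h
    · exact absurd h (mul_ne_zero he hes)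
    · exact h
  rcases eq_or_ne ((eta * x k1 0) * (eta * x k2 1) - (star eta * x k1 1) * (star eta * x k2 0)) 0
    with hD | hD
  · -- degenerate case: all y's on one line (perp to U x k1), contradicting y-independence
    have claim : ∀ m : Fin n,
        (starRingEnd ℂ) (y m 0) * (eta * x k1 0) + (starRingEnd ℂ) (y m 1) * (star eta * x k1 1) = 0 := by
      intro m
      rcases lt_or_ge (k1 : ℕ) (m : ℕ) with hm | hm
      · exact hc' m k1 hm
      · have h1 := hb' m k2 (lt_of_le_of_lt hm hlt)
        by_cases hc0 : star eta * x k2 0 = 0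
        · have hc1 : eta * x k2 1 ≠ 0 := by
            intro hc1
            refine hxk2 ⟨?_, ?_⟩
            · rcases mul_eq_zero.mp hc0 with h | h
              · exact absurd h hes
              · exact h
            · rcases mul_eq_zero.mp hc1 with h | h
              · exact absurd h he
              · exact h
          have hq2 : (eta * x k2 1) *
              ((starRingEnd ℂ) (y m 0) * (eta * x k1 0) + (starRingEnd ℂ) (y m 1) * (star eta * x k1 1)) = 0 := by
            linear_combination (star eta * x k1 1) * h1 + ((starRingEnd ℂ) (y m 0)) * hD
          exact (mul_eq_zero.mp hq2).resolve_left hc1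
        · have hq2 : (star eta * x k2 0) *
              ((starRingEnd ℂ) (y m 0) * (eta * x k1 0) + (starRingEnd ℂ) (y m 1) * (star eta * x k1 1)) = 0 := by
            linear_combination (eta * x k1 0) * h1 - ((starRingEnd ℂ) (y m 1)) * hD
          exact (mul_eq_zero.mp hq2).resolve_left hc0
    have hp := claim p
    have hq := claim q
    apply hdy
    have hna : ¬ (eta * x k1 0 = 0 ∧ star eta * x k1 1 = 0) := by
      rintro ⟨e0, e1⟩
      refine hxk1 ⟨?_, ?_⟩
      · rcases mul_eq_zero.mp e0 with h | h
        · exact absurd h he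
        · exact h
      · rcases mul_eq_zero.mp e1 with h | h
        · exact absurd h hes
        · exact h
    have hcd : (starRingEnd ℂ) (y p 0) * (starRingEnd ℂ) (y q 1)
        - (starRingEnd ℂ) (y p 1) * (starRingEnd ℂ) (y q 0) = 0 := by
      rcases not_and_or.mp hna with h | h
      · have h5 : (eta * x k1 0) * ((starRingEnd ℂ) (y p 0) * (starRingEnd ℂ) (y q 1)
            - (starRingEnd ℂ) (y p 1) * (starRingEnd ℂ) (y q 0)) = 0 := by
          linear_combination (starRingEnd ℂ) (y q 1) * hp - (starRingEnd ℂ) (y p 1) * hq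
        exact (mul_eq_zero.mp h5).resolve_left h
      · have h6 : (star eta * x k1 1) * ((starRingEnd ℂ) (y p 1) * (starRingEnd ℂ) (y q 0)
            - (starRingEnd ℂ) (y p 0) * (starRingEnd ℂ) (y q 1)) = 0 := by
          linear_combination (starRingEnd ℂ) (y q 0) * hp - (starRingEnd ℂ) (y p 0) * hq
        linear_combination -((mul_eq_zero.mp h6).resolve_left h)
    have : (starRingEnd ℂ) (y p 0 * y q 1 - y p 1 * y q 0) = 0 := by
      rw [map_sub, _root_.map_mul, _root_.map_mul]; exact hcd
    rwa [← Complex.star_def, star_eq_zero] at this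
  · -- main case: U x k1 and U* x k2 independent
    have hy0 : ∀ m : Fin n, m ≠ k1 → m ≠ k2 → y m 0 = 0 ∧ y m 1 = 0 := by
      intro m hm1 hm2
      have hm1' : (m : ℕ) ≠ (k1 : ℕ) := fun hh => hm1 (Fin.ext hh)
      have hm2' : (m : ℕ) ≠ (k2 : ℕ) := fun hh => hm2 (Fin.ext hh)
      have key : (starRingEnd ℂ) (y m 0) = 0 ∧ (starRingEnd ℂ) (y m 1) = 0 := by
        rcases lt_or_gt_of_ne hm1' with hml | hmg
        · -- m < k1 < k2 : use hb' twice
          exact solve2 (hb' m k1 hml) (hb' m k2 (hml.trans hlt)) (by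
            intro h0
            exact hk (hdUU _ (by linear_combination h0)))
        · rcases lt_or_gt_of_ne hm2' with hml2 | hmg2
          · -- k1 < m < k2
            exact solve2 (hc' m k1 hmg) (hb' m k2 hml2) hD
          · -- k2 < m
            exact solve2 (hc' m k1 hmg) (hc' m k2 hmg2) (by
              intro h0
              exact hk (hdUU _ (by linear_combination h0)))
      constructor
      · rw [← star_eq_zero]; exact key.1
      · rw [← star_eq_zero]; exact key.2
    -- y k1, y k2 are independent (via condition (d))
    have hdy2 : y k1 0 * y k2 1 - y k1 1 * y k2 0 ≠ 0 := by
      intro hny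
      obtain ⟨v0, v1, hv, hv1, hv2⟩ : ∃ v0 v1 : ℂ, ¬ (v0 = 0 ∧ v1 = 0) ∧
          ((starRingEnd ℂ) (y k1 0) * v0 + (starRingEnd ℂ) (y k1 1) * v1 = 0) ∧
          ((starRingEnd ℂ) (y k2 0) * v0 + (starRingEnd ℂ) (y k2 1) * v1 = 0) := by
        by_cases h10 : y k1 0 = 0 ∧ y k1 1 = 0
        · by_cases h20 : y k2 0 = 0 ∧ y k2 1 = 0
          · exact ⟨1, 0, by simp, by simp [h10.1, h10.2], by simp [h20.1, h20.2]⟩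
          · refine ⟨(starRingEnd ℂ) (y k2 1), -((starRingEnd ℂ) (y k2 0)), ?_,
              by simp [h10.1, h10.2], by ring⟩
            rintro ⟨e1, e2⟩
            exact h20 ⟨by rwa [neg_eq_zero, ← Complex.star_def, star_eq_zero] at e2,
              by rwa [← Complex.star_def, star_eq_zero] at e1⟩
        · refine ⟨(starRingEnd ℂ) (y k1 1), -((starRingEnd ℂ) (y k1 0)), ?_, by ring, ?_⟩
          · rintro ⟨e1, e2⟩
            exact h10 ⟨by rwa [neg_eq_zero, ← Complex.star_def, star_eq_zero] at e2,
              by rwa [← Complex.star_def, star_eq_zero] at e1⟩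
          · have hcj := congrArg (starRingEnd ℂ) hny
            simp only [map_sub, _root_.map_mul, map_zero] at hcj
            linear_combination -hcj
      have expand : ∀ z : Fin n → Fin 2 → ℂ,
          ∑ m, ((starRingEnd ℂ) (z m 0) * v0 + (starRingEnd ℂ) (z m 1) * v1) *
              (z m 0 * (starRingEnd ℂ) v0 + z m 1 * (starRingEnd ℂ) v1)
          = (∑ m, z m 0 * (starRingEnd ℂ) (z m 0)) * (v0 * (starRingEnd ℂ) v0)
          + (∑ m, z m 0 * (starRingEnd ℂ) (z m 1)) * (v1 * (starRingEnd ℂ) v0)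
          + (∑ m, z m 1 * (starRingEnd ℂ) (z m 0)) * (v0 * (starRingEnd ℂ) v1)
          + (∑ m, z m 1 * (starRingEnd ℂ) (z m 1)) * (v1 * (starRingEnd ℂ) v1) := by
        intro z
        simp only [Finset.sum_mul, ← Finset.sum_add_distrib]
        exact Finset.sum_congr rfl fun m _ => by ring
      have hx0 : ∑ m, ((starRingEnd ℂ) (x m 0) * v0 + (starRingEnd ℂ) (x m 1) * v1) *
          (x m 0 * (starRingEnd ℂ) v0 + x m 1 * (starRingEnd ℂ) v1) = 0 := by
        rw [expand x, ← hd' 0 0, ← hd' 0 1, ← hd' 1 0, ← hd' 1 1, ← expand y]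
        apply Finset.sum_eq_zero
        intro m _
        rcases eq_or_ne m k1 with rfl | hm1
        · rw [hv1, zero_mul]
        rcases eq_or_ne m k2 with rfl | hm2
        · rw [hv2, zero_mul]
        · obtain ⟨e0, e1⟩ := hy0 m hm1 hm2
          rw [e0, e1]; simp
      have hsq : ∑ m, (Complex.normSq (x m 0 * (starRingEnd ℂ) v0 + x m 1 * (starRingEnd ℂ) v1) : ℂ) = 0 := by
        rw [← hx0]
        apply Finset.sum_congr rfl
        intro m _
        have hct : (starRingEnd ℂ) (x m 0 * (starRingEnd ℂ) v0 + x m 1 * (starRingEnd ℂ) v1)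
            = (starRingEnd ℂ) (x m 0) * v0 + (starRingEnd ℂ) (x m 1) * v1 := by
          simp [map_add, _root_.map_mul, Complex.conj_conj]
        rw [← hct, ← Complex.mul_conj]
        ring
      rw [← Complex.ofReal_sum, Complex.ofReal_eq_zero] at hsq
      have hall := (Finset.sum_eq_zero_iff_of_nonneg
        (fun m _ => Complex.normSq_nonneg _)).mp hsq
      have ht1 : x k1 0 * (starRingEnd ℂ) v0 + x k1 1 * (starRingEnd ℂ) v1 = 0 :=
        Complex.normSq_eq_zero.mp (hall k1 (Finset.mem_univ _))
      have ht2 : x k2 0 * (starRingEnd ℂ) v0 + x k2 1 * (starRingEnd ℂ) v1 = 0 :=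
        Complex.normSq_eq_zero.mp (hall k2 (Finset.mem_univ _))
      have := solve2 (p := (starRingEnd ℂ) v0) (q := (starRingEnd ℂ) v1)
        (a0 := x k1 0) (a1 := x k1 1) (b0 := x k2 0) (b1 := x k2 1)
        (by linear_combination ht1) (by linear_combination ht2) hk
      exact hv ⟨by rw [← star_eq_zero]; exact this.1, by rw [← star_eq_zero]; exact this.2⟩
    -- condition (a) now forces x k1 = 0, contradiction
    have h0 : ∀ a b : Fin 2,
        (starRingEnd ℂ) (y k1 a) * x k1 b + (starRingEnd ℂ) (y k2 a) * x k2 b = 0 := by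
      intro a b
      have := ha' a b
      rwa [Finset.sum_eq_add_of_mem k1 k2 (Finset.mem_univ _) (Finset.mem_univ _) hne
        (fun m _ hm => by
          obtain ⟨e0, e1⟩ := hy0 m hm.1 hm.2
          fin_cases a <;> simp [e0, e1])] at this
    have hdet' : (starRingEnd ℂ) (y k1 0) * (starRingEnd ℂ) (y k2 1)
        - (starRingEnd ℂ) (y k2 0) * (starRingEnd ℂ) (y k1 1) ≠ 0 := by
      intro hz
      apply hdy2
      have : (starRingEnd ℂ) (y k1 0 * y k2 1 - y k1 1 * y k2 0) = 0 := by
        rw [map_sub, _root_.map_mul, _root_.map_mul]; linear_combination hz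
      rwa [← Complex.star_def, star_eq_zero] at this
    have hx1 : ∀ b : Fin 2, x k1 b = 0 := by
      intro b
      exact (solve2 (p := x k1 b) (q := x k2 b) (a0 := (starRingEnd ℂ) (y k1 0))
        (a1 := (starRingEnd ℂ) (y k2 0)) (b0 := (starRingEnd ℂ) (y k1 1))
        (b1 := (starRingEnd ℂ) (y k2 1))
        (by linear_combination h0 0 b) (by linear_combination h0 1 b) hdet').1
    exact hk (by rw [hx1 0, hx1 1]; ring)
end

section
/- Let {M_i}_{i=1}^m be an observable on a finite-dimensional complex Hilbert space H and H₀ a subspace of H. Then H₀ is indistinguishable for {M_i} if and only if ⟨ψ, M_i φ⟩ = 0 for every i and every pair of mutually orthogonal vectors φ, ψ ∈ H₀. -/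
/-!
Both sides say that the compression `P Mᵢ P` of `Mᵢ` to `H₀` (`P` the orthogonal projection
onto `H₀`) is a scalar multiple `c P`. If it is, a state `ρ` supported in `H₀` satisfies
`ρ = P ρ P`, so `Tr(Mᵢ ρ) = Tr(P Mᵢ P ρ) = c`. Conversely, the pure states `|χ⟩⟨χ|` show that
`⟨χ, Mᵢ χ⟩` is constant on unit vectors of `H₀`, and complex polarization on `H₀` turns this into
`P Mᵢ P = c P`. On the other side, `⟨ψ, Mᵢ φ⟩ = 0` for `ψ ⊥ φ` in `H₀` makes every vector of `H₀`
an eigenvector of the compression, which is then a scalar.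
-/

/-- A state on H whose range lies in a subspace H₀: a positive operator of trace one. -/
def IsStateSupportedIn {H : Type*} [NormedAddCommGroup H] [InnerProductSpace ℂ H]
    [CompleteSpace H] (H₀ : Submodule ℂ H) (ρ : H →L[ℂ] H) : Prop :=
  ρ.IsPositive ∧ LinearMap.trace ℂ H ↑ρ = 1 ∧ LinearMap.range (ρ : H →ₗ[ℂ] H) ≤ H₀

/-- H₀ is indistinguishable for the observable {M_i}: all states supported in H₀
give the same outcome probabilities Tr(M_i ρ). -/
def Indistinguishable {H : Type*} [NormedAddCommGroup H] [InnerProductSpace ℂ H]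
    [CompleteSpace H] {m : ℕ} (M : Fin m → H →L[ℂ] H) (H₀ : Submodule ℂ H) : Prop :=
  ∀ i, ∀ ρ₁ ρ₂ : H →L[ℂ] H,
    IsStateSupportedIn H₀ ρ₁ → IsStateSupportedIn H₀ ρ₂ →
    LinearMap.trace ℂ H ((M i : H →ₗ[ℂ] H) ∘ₗ (ρ₁ : H →ₗ[ℂ] H)) =
      LinearMap.trace ℂ H ((M i : H →ₗ[ℂ] H) ∘ₗ (ρ₂ : H →ₗ[ℂ] H))

open scoped InnerProductSpace
open InnerProductSpace (rankOne)

section Compression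

variable {H : Type*} [NormedAddCommGroup H] [InnerProductSpace ℂ H]

/-- The compression `P A P` of `A` to `K`, `P` the orthogonal projection onto `K`,
is a scalar multiple of `P`. -/
def IsScalarCompression (A : H →L[ℂ] H) (K : Submodule ℂ H) : Prop :=
  ∃ c : ℂ, ∀ φ ∈ K, ∀ ψ ∈ K, ⟪ψ, A φ⟫_ℂ = c * ⟪ψ, φ⟫_ℂ

theorem inner_map_eq_zero_of_forall_mem {T : H →ₗ[ℂ] H} {K : Submodule ℂ H}
    (hT : ∀ z ∈ K, ⟪z, T z⟫_ℂ = 0) {x y : H} (hx : x ∈ K) (hy : y ∈ K) :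
    ⟪y, T x⟫_ℂ = 0 := by
  have hT' : ∀ z ∈ K, ⟪T z, z⟫_ℂ = 0 := fun z hz => by rw [← inner_conj_symm, hT z hz, map_zero]
  rw [← inner_conj_symm, inner_map_polarization', hT' _ (K.add_mem hx hy),
    hT' _ (K.sub_mem hx hy), hT' _ (K.add_mem hx (K.smul_mem _ hy)),
    hT' _ (K.sub_mem hx (K.smul_mem _ hy))]
  simp

theorem isScalarCompression_of_inner_map_self_eq_mul {A : H →L[ℂ] H} {K : Submodule ℂ H} (c : ℂ)
    (hc : ∀ χ ∈ K, ⟪χ, A χ⟫_ℂ = c * ⟪χ, χ⟫_ℂ) : IsScalarCompression A K := by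
  refine ⟨c, fun φ hφ ψ hψ => ?_⟩
  have h := inner_map_eq_zero_of_forall_mem (T := ((A - c • 1 : H →L[ℂ] H) : H →ₗ[ℂ] H))
    (fun z hz => by simp [hc z hz]) hφ hψ
  simpa [inner_sub_right, inner_smul_right, sub_eq_zero] using h

theorem isScalarCompression_of_forall_norm_eq_one {A : H →L[ℂ] H} {K : Submodule ℂ H} {c : ℂ}
    (hc : ∀ χ ∈ K, ‖χ‖ = 1 → ⟪χ, A χ⟫_ℂ = c) : IsScalarCompression A K := by
  refine isScalarCompression_of_inner_map_self_eq_mul c fun χ hχ => ?_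
  rcases eq_or_ne χ 0 with rfl | hχ0
  · simp
  have hunit := hc _ (K.smul_mem (‖χ‖⁻¹ : ℂ) hχ) (norm_smul_inv_norm hχ0)
  have hnorm : (‖χ‖ : ℂ) ≠ 0 := by exact_mod_cast norm_ne_zero_iff.2 hχ0
  rw [map_smul, inner_smul_left, inner_smul_right, map_inv₀, Complex.conj_ofReal] at hunit
  rw [← hunit, inner_self_eq_norm_sq_to_K, RCLike.ofReal_eq_complex_ofReal]
  field_simp

end Compression

section Orthogonality

variable {H : Type*} [NormedAddCommGroup H] [InnerProductSpace ℂ H] {K : Submodule ℂ H}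
  {A : H →L[ℂ] H}

theorem inner_map_eq_mul_of_inner_eq_zero
    (hA : ∀ φ ∈ K, ∀ ψ ∈ K, ⟪ψ, φ⟫_ℂ = 0 → ⟪ψ, A φ⟫_ℂ = 0) {u v : H} (hu : u ∈ K) (hv : v ∈ K) :
    ⟪u, A v⟫_ℂ = ⟪v, A v⟫_ℂ / ⟪v, v⟫_ℂ * ⟪u, v⟫_ℂ := by
  rcases eq_or_ne v 0 with rfl | hv0
  · simp
  have hvv : ⟪v, v⟫_ℂ ≠ 0 := inner_self_ne_zero.2 hv0
  set u' := u - (⟪v, u⟫_ℂ / ⟪v, v⟫_ℂ) • v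
  have horth : ⟪u', v⟫_ℂ = 0 := by
    rw [inner_sub_left, inner_smul_left, map_div₀, inner_conj_symm, inner_conj_symm,
      div_mul_cancel₀ _ hvv, sub_self]
  have h := hA v hv u' (K.sub_mem hu (K.smul_mem _ hv)) horth
  rw [inner_sub_left, inner_smul_left, map_div₀, inner_conj_symm, inner_conj_symm,
    sub_eq_zero] at h
  rw [h]
  ring

theorem isScalarCompression_iff_inner_eq_zero [K.HasOrthogonalProjection] :
    IsScalarCompression A K ↔ ∀ φ ∈ K, ∀ ψ ∈ K, ⟪ψ, φ⟫_ℂ = 0 → ⟪ψ, A φ⟫_ℂ = 0 := by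
  refine ⟨fun ⟨c, hc⟩ φ hφ ψ hψ h => by rw [hc φ hφ ψ hψ, h, mul_zero], fun hA => ?_⟩
  set f : K →L[ℂ] K := K.orthogonalProjectionOnto ∘L A ∘L K.subtypeL
  have hf : ∀ u v : K, ⟪u, f v⟫_ℂ = ⟪(u : H), A v⟫_ℂ := fun u v => by simp [f]
  have heigen : ∀ v : K, f v = (⟪(v : H), A v⟫_ℂ / ⟪(v : H), v⟫_ℂ) • v := fun v =>
    ext_inner_left ℂ fun u => by
      rw [hf, inner_smul_right, Submodule.coe_inner]
      exact inner_map_eq_mul_of_inner_eq_zero hA u.2 v.2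
  obtain ⟨c, hc⟩ := LinearMap.exists_eq_smul_id_of_forall_notLinearIndependent
    (f := (f : K →ₗ[ℂ] K)) fun v hli => by
      simpa using LinearIndependent.pair_iff.1 hli (⟪(v : H), A v⟫_ℂ / ⟪(v : H), v⟫_ℂ) (-1)
        (by simp [heigen])
  refine ⟨c, fun φ hφ ψ hψ => ?_⟩
  have h := hf ⟨ψ, hψ⟩ ⟨φ, hφ⟩
  rw [← ContinuousLinearMap.coe_coe, hc] at h
  simpa [inner_smul_right] using h.symm

end Orthogonality

section Trace

variable {H : Type*} [NormedAddCommGroup H] [InnerProductSpace ℂ H] [FiniteDimensional ℂ H]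
  {K : Submodule ℂ H}

theorem trace_comp_rankOne_self (A : H →L[ℂ] H) (χ : H) :
    LinearMap.trace ℂ H ((A : H →ₗ[ℂ] H) ∘ₗ (rankOne ℂ χ χ : H →ₗ[ℂ] H)) = ⟪χ, A χ⟫_ℂ := by
  rw [← ContinuousLinearMap.toLinearMap_comp, InnerProductSpace.comp_rankOne,
    InnerProductSpace.trace_rankOne]

theorem isStateSupportedIn_rankOne_self {χ : H} (hχ : χ ∈ K) (h1 : ‖χ‖ = 1) :
    IsStateSupportedIn K (rankOne ℂ χ χ) := by
  refine ⟨InnerProductSpace.isPositive_rankOne_self χ, ?_, ?_⟩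
  · rw [InnerProductSpace.trace_rankOne, inner_self_eq_norm_sq_to_K, h1]
    simp
  · rintro _ ⟨x, rfl⟩
    exact K.smul_mem _ hχ

theorem trace_comp_eq_mul_trace {A : H →L[ℂ] H} {c : ℂ}
    (hA : ∀ φ ∈ K, ∀ ψ ∈ K, ⟪ψ, A φ⟫_ℂ = c * ⟪ψ, φ⟫_ℂ) {ρ : H →L[ℂ] H} (hρ : IsSelfAdjoint ρ)
    (hrange : LinearMap.range (ρ : H →ₗ[ℂ] H) ≤ K) :
    LinearMap.trace ℂ H ((A : H →ₗ[ℂ] H) ∘ₗ (ρ : H →ₗ[ℂ] H)) = c * LinearMap.trace ℂ H ρ := by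
  set P := K.starProjection
  have hP : IsSelfAdjoint P := isSelfAdjoint_starProjection K
  have hPAP : P * A * P = c • P := by
    ext x
    refine ext_inner_left ℂ fun y => ?_
    simp only [mul_apply_eq_comp, smul_apply, inner_smul_right]
    rw [← K.inner_starProjection_left_eq_right, hA _ (K.starProjection_apply_mem x) _
      (K.starProjection_apply_mem y), K.inner_starProjection_left_eq_right,
      ← mul_apply_eq_comp, K.isIdempotentElem_starProjection.eq]
  have hPρ : P * ρ = ρ := by
    ext x
    exact K.starProjection_eq_self_iff.2 (hrange ⟨x, rfl⟩)
  have hρP : ρ * P = ρ := by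
    simpa [hρ.star_eq, hP.star_eq] using congrArg star hPρ
  change LinearMap.trace ℂ H ((A * ρ : H →L[ℂ] H) : H →ₗ[ℂ] H) = _
  calc LinearMap.trace ℂ H ((A * ρ : H →L[ℂ] H) : H →ₗ[ℂ] H)
      = LinearMap.trace ℂ H ((A * P * ρ * P : H →L[ℂ] H) : H →ₗ[ℂ] H) := by
        rw [mul_assoc A, hPρ, mul_assoc, hρP]
    _ = LinearMap.trace ℂ H ((P * A * P * ρ : H →L[ℂ] H) : H →ₗ[ℂ] H) := by
        rw [ContinuousLinearMap.toLinearMap_mul, LinearMap.trace_mul_comm,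
          ← ContinuousLinearMap.toLinearMap_mul]
        simp only [mul_assoc]
    _ = c * LinearMap.trace ℂ H ρ := by
        rw [hPAP, smul_mul_assoc, hPρ, ContinuousLinearMap.toLinearMap_smul, map_smul,
          smul_eq_mul]

theorem isScalarCompression_iff_trace_comp_eq (A : H →L[ℂ] H) :
    IsScalarCompression A K ↔ ∀ ρ₁ ρ₂ : H →L[ℂ] H,
      IsStateSupportedIn K ρ₁ → IsStateSupportedIn K ρ₂ →
      LinearMap.trace ℂ H ((A : H →ₗ[ℂ] H) ∘ₗ (ρ₁ : H →ₗ[ℂ] H)) =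
        LinearMap.trace ℂ H ((A : H →ₗ[ℂ] H) ∘ₗ (ρ₂ : H →ₗ[ℂ] H)) := by
  constructor
  · rintro ⟨c, hc⟩ ρ₁ ρ₂ ⟨hpos₁, htr₁, hrange₁⟩ ⟨hpos₂, htr₂, hrange₂⟩
    rw [trace_comp_eq_mul_trace hc hpos₁.isSelfAdjoint hrange₁,
      trace_comp_eq_mul_trace hc hpos₂.isSelfAdjoint hrange₂, htr₁, htr₂]
  · intro hA
    by_cases hunit : ∃ e ∈ K, ‖e‖ = 1
    · obtain ⟨e, he, he1⟩ := hunit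
      refine isScalarCompression_of_forall_norm_eq_one (c := ⟪e, A e⟫_ℂ) fun χ hχ hχ1 => ?_
      have h := hA _ _ (isStateSupportedIn_rankOne_self hχ hχ1)
        (isStateSupportedIn_rankOne_self he he1)
      rwa [trace_comp_rankOne_self, trace_comp_rankOne_self] at h
    · exact isScalarCompression_of_forall_norm_eq_one (c := 0) fun χ hχ hχ1 =>
        absurd ⟨χ, hχ, hχ1⟩ hunit

end Trace

theorem indistinguishable_iff_orthogonal_pairs_general
    {H : Type*} [NormedAddCommGroup H] [InnerProductSpace ℂ H] [FiniteDimensional ℂ H]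
    {m : ℕ} (M : Fin m → H →L[ℂ] H)
    (H₀ : Submodule ℂ H) :
    Indistinguishable M H₀ ↔
      ∀ i, ∀ φ ∈ H₀, ∀ ψ ∈ H₀, (inner ℂ ψ φ : ℂ) = 0 → (inner ℂ ψ (M i φ) : ℂ) = 0 :=
  forall_congr' fun i => by
    rw [← isScalarCompression_iff_trace_comp_eq, isScalarCompression_iff_inner_eq_zero]

/-- A subspace H₀ is indistinguishable for an observable {M_i} iff ⟨ψ, M_i φ⟩ = 0 for
every i and every pair of mutually orthogonal vectors φ, ψ ∈ H₀. -/
theorem indistinguishable_iff_orthogonal_pairs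
    {H : Type*} [NormedAddCommGroup H] [InnerProductSpace ℂ H] [FiniteDimensional ℂ H]
    {m : ℕ} (M : Fin m → H →L[ℂ] H)
    (hpos : ∀ i, (M i).IsPositive) (hsum : ∑ i, M i = 1)
    (H₀ : Submodule ℂ H) :
    Indistinguishable M H₀ ↔
      ∀ i, ∀ φ ∈ H₀, ∀ ψ ∈ H₀, (inner ℂ ψ φ : ℂ) = 0 → (inner ℂ ψ (M i φ) : ℂ) = 0 :=
  indistinguishable_iff_orthogonal_pairs_general M H₀
end

section
/- Let {M_i}_{i=1}^m be an observable on a finite-dimensional complex Hilbert space H_A and {N_j}_{j=1}^l an observable on a finite-dimensional complex Hilbert space H_B. If H₁ ⊆ H_A is an indistinguishable subspace for {M_i} and H₂ ⊆ H_B is an indistinguishable subspace for {N_j}, then H₁ ⊗ H₂ is an indistinguishable subspace for the observable {M_i ⊗ N_j}_{i,j} on H_A ⊗ H_B. -/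
open Matrix Kronecker ComplexOrder

/-!
A subspace `W` is indistinguishable for `{M_i}` exactly when every `M_i` compresses to a scalar
on `W`: `⟪x, M_i y⟫ = c_i ⟪x, y⟫` for `x y ∈ W`. Pure states supported on `W` force the quadratic
form of `M_i` to be `c_i ‖x‖²`, and polarization upgrades this to the sesquilinear form;
conversely, writing a state supported on `W` as `ρ = B Bᴴ`, the columns `b_k` of `B` lie in `W`
and `Tr (M_i ρ) = ∑ ⟪b_k, M_i b_k⟫ = c_i Tr ρ`. Scalar compressions multiply on product vectors
`x ⊗ y`, and the identity extends sesquilinearly to their span.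
-/

/-- H₀ is an indistinguishable subspace for the family of operators {M_i} (density
matrices supported in H₀ are not distinguished by the outcome probabilities Tr(M_i ρ)). -/
def MatIndistinguishable {dA : Type*} [Fintype dA] {ι : Type*}
    (M : ι → Matrix dA dA ℂ) (H₀ : Submodule ℂ (dA → ℂ)) : Prop :=
  ∀ i, ∀ ρ₁ ρ₂ : Matrix dA dA ℂ,
    ρ₁.PosSemidef → ρ₁.trace = 1 → LinearMap.range ρ₁.mulVecLin ≤ H₀ →
    ρ₂.PosSemidef → ρ₂.trace = 1 → LinearMap.range ρ₂.mulVecLin ≤ H₀ →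
    (M i * ρ₁).trace = (M i * ρ₂).trace

namespace Matrix

variable {m n R : Type*} [Fintype m] [Fintype n]

theorem trace_mul_mul_conjTranspose [CommSemiring R] [StarRing R]
    (A : Matrix n n R) (B : Matrix n m R) :
    (A * (B * Bᴴ)).trace = ∑ k, star (B.col k) ⬝ᵥ A *ᵥ B.col k := by
  rw [← Matrix.mul_assoc, trace_mul_comm, ← Matrix.mul_assoc]
  simp only [trace, diag_apply, mul_apply, conjTranspose_apply, col_apply, dotProduct, mulVec,
    Pi.star_apply, Finset.mul_sum, Finset.sum_mul]
  refine Finset.sum_congr rfl fun k _ => ?_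
  rw [Finset.sum_comm]
  exact Finset.sum_congr rfl fun i _ => Finset.sum_congr rfl fun j _ => by ring

theorem range_mulVecLin_mul_conjTranspose [Field R] [PartialOrder R] [StarRing R]
    [StarOrderedRing R] (B : Matrix n m R) :
    LinearMap.range (B * Bᴴ).mulVecLin = LinearMap.range B.mulVecLin :=
  Submodule.eq_of_le_of_finrank_le
    (by rw [mulVecLin_mul]; exact LinearMap.range_comp_le_range _ _)
    (rank_self_mul_conjTranspose B).ge

theorem kronecker_mulVec_tmul [CommSemiring R] (A : Matrix m m R) (B : Matrix n n R)
    (x : m → R) (y : n → R) :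
    (A ⊗ₖ B) *ᵥ (fun q => x q.1 * y q.2) = fun q => (A *ᵥ x) q.1 * (B *ᵥ y) q.2 := by
  funext q
  simp only [mulVec, dotProduct, kroneckerMap_apply, Fintype.sum_prod_type, Finset.sum_mul_sum]
  exact Finset.sum_congr rfl fun i _ => Finset.sum_congr rfl fun j _ => by ring

theorem tmul_dotProduct_tmul [CommSemiring R] (x x' : m → R) (y y' : n → R) :
    (fun q : m × n => x q.1 * y q.2) ⬝ᵥ (fun q => x' q.1 * y' q.2) = (x ⬝ᵥ x') * (y ⬝ᵥ y') := by
  simp only [dotProduct, Fintype.sum_prod_type, Finset.sum_mul_sum]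
  exact Finset.sum_congr rfl fun i _ => Finset.sum_congr rfl fun j _ => by ring

theorem star_dotProduct_mulVec_polarization (A : Matrix n n ℂ) (x y : n → ℂ) :
    4 * (star x ⬝ᵥ A *ᵥ y) =
      star (x + y) ⬝ᵥ A *ᵥ (x + y) - star (x - y) ⬝ᵥ A *ᵥ (x - y)
        - Complex.I * (star (x + Complex.I • y) ⬝ᵥ A *ᵥ (x + Complex.I • y))
        + Complex.I * (star (x - Complex.I • y) ⬝ᵥ A *ᵥ (x - Complex.I • y)) := by
  simp only [star_add, star_sub, star_smul, mulVec_add, mulVec_sub, mulVec_smul, add_dotProduct,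
    sub_dotProduct, smul_dotProduct, dotProduct_add, dotProduct_sub, dotProduct_smul,
    Complex.star_def, Complex.conj_I, smul_eq_mul]
  ring_nf
  rw [Complex.I_sq]
  ring

/-- The compression `P_W A P_W` of `A` to `W` is `c • P_W`. -/
def IsScalarOn (A : Matrix n n ℂ) (W : Submodule ℂ (n → ℂ)) (c : ℂ) : Prop :=
  ∀ x ∈ W, ∀ y ∈ W, star x ⬝ᵥ A *ᵥ y = c * (star x ⬝ᵥ y)

namespace IsScalarOn

variable {A : Matrix n n ℂ} {W : Submodule ℂ (n → ℂ)} {c : ℂ}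

theorem of_quadratic (h : ∀ x ∈ W, star x ⬝ᵥ A *ᵥ x = c * (star x ⬝ᵥ x)) :
    IsScalarOn A W c := by
  classical
  intro x hx y hy
  have hIy : Complex.I • y ∈ W := W.smul_mem _ hy
  have hpol := star_dotProduct_mulVec_polarization 1 x y
  simp only [one_mulVec] at hpol
  have hpolA := star_dotProduct_mulVec_polarization A x y
  rw [h _ (W.add_mem hx hy), h _ (W.sub_mem hx hy), h _ (W.add_mem hx hIy),
    h _ (W.sub_mem hx hIy)] at hpolA
  linear_combination (hpolA - c * hpol) / 4

theorem of_span {s : Set (n → ℂ)}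
    (h : ∀ x ∈ s, ∀ y ∈ s, star x ⬝ᵥ A *ᵥ y = c * (star x ⬝ᵥ y)) :
    IsScalarOn A (Submodule.span ℂ s) c := by
  intro x hx y hy
  induction hx, hy using Submodule.span_induction₂ with
  | mem_mem x y hx hy => exact h x hx y hy
  | zero_left y _ => simp
  | zero_right x _ => simp
  | add_left x₁ x₂ y _ _ _ h₁ h₂ => simp only [star_add, add_dotProduct, h₁, h₂, mul_add]
  | add_right x y₁ y₂ _ _ _ h₁ h₂ => simp only [mulVec_add, dotProduct_add, h₁, h₂, mul_add]
  | smul_left a x y _ _ h => simp only [star_smul, smul_dotProduct, h, smul_eq_mul]; ring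
  | smul_right a x y _ _ h => simp only [mulVec_smul, dotProduct_smul, h, smul_eq_mul]; ring

theorem kronecker {A : Matrix m m ℂ} {B : Matrix n n ℂ} {W₁ : Submodule ℂ (m → ℂ)}
    {W₂ : Submodule ℂ (n → ℂ)} {c d : ℂ} (hA : IsScalarOn A W₁ c) (hB : IsScalarOn B W₂ d) :
    IsScalarOn (A ⊗ₖ B)
      (Submodule.span ℂ {v | ∃ x ∈ W₁, ∃ y ∈ W₂, v = fun q => x q.1 * y q.2}) (c * d) := by
  refine of_span ?_
  rintro _ ⟨x, hx, y, hy, rfl⟩ _ ⟨x', hx', y', hy', rfl⟩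
  have hstar : star (fun q : m × n => x q.1 * y q.2) = fun q => star x q.1 * star y q.2 :=
    funext fun q => star_mul' _ _
  rw [hstar, kronecker_mulVec_tmul, tmul_dotProduct_tmul, tmul_dotProduct_tmul,
    hA x hx x' hx', hB y hy y' hy']
  ring

theorem trace_mul_eq (hA : IsScalarOn A W c) {ρ : Matrix n n ℂ} (hρ : ρ.PosSemidef)
    (hρW : LinearMap.range ρ.mulVecLin ≤ W) : (A * ρ).trace = c * ρ.trace := by
  classical
  obtain ⟨B, rfl⟩ : ∃ B : Matrix n n ℂ, ρ = B * Bᴴ := by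
    open scoped MatrixOrder in exact CStarAlgebra.nonneg_iff_eq_mul_star_self.mp hρ.nonneg
  have hcol : ∀ k, B.col k ∈ W := fun k => hρW <| by
    rw [range_mulVecLin_mul_conjTranspose, range_mulVecLin]
    exact Submodule.subset_span ⟨k, rfl⟩
  have htrace : (B * Bᴴ).trace = ∑ k, star (B.col k) ⬝ᵥ B.col k := by
    simpa only [Matrix.one_mul, one_mulVec] using trace_mul_mul_conjTranspose 1 B
  rw [trace_mul_mul_conjTranspose, htrace, Finset.mul_sum]
  exact Finset.sum_congr rfl fun k _ => hA _ (hcol k) _ (hcol k)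

end IsScalarOn

theorem exists_pureState {x : n → ℂ} (hx : x ≠ 0) :
    ∃ ρ : Matrix n n ℂ, ρ.PosSemidef ∧ ρ.trace = 1 ∧ LinearMap.range ρ.mulVecLin ≤ ℂ ∙ x ∧
      ∀ A : Matrix n n ℂ, (A * ρ).trace = (star x ⬝ᵥ A *ᵥ x) / (star x ⬝ᵥ x) := by
  have hnorm : star x ⬝ᵥ x ≠ 0 := dotProduct_star_self_eq_zero.not.mpr hx
  refine ⟨(star x ⬝ᵥ x)⁻¹ • vecMulVec x (star x),
    (posSemidef_vecMulVec_self_star x).smul (inv_nonneg.mpr (dotProduct_star_self_nonneg x)),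
    ?_, ?_, fun A => ?_⟩
  · rw [trace_smul, trace_vecMulVec, dotProduct_comm x, smul_eq_mul, inv_mul_cancel₀ hnorm]
  · rintro _ ⟨v, rfl⟩
    rw [mulVecLin_apply, smul_mulVec, vecMulVec_mulVec, op_smul_eq_smul]
    exact Submodule.smul_mem _ _ (Submodule.smul_mem _ _ (Submodule.mem_span_singleton_self x))
  · rw [mul_smul_comm, mul_vecMulVec, trace_smul, trace_vecMulVec, dotProduct_comm (A *ᵥ x),
      smul_eq_mul, div_eq_inv_mul]

end Matrix

theorem MatIndistinguishable.exists_isScalarOn {n ι : Type*} [Fintype n] {M : ι → Matrix n n ℂ}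
    {W : Submodule ℂ (n → ℂ)} (hM : MatIndistinguishable M W) (i : ι) :
    ∃ c, IsScalarOn (M i) W c := by
  obtain rfl | hW := eq_or_ne W ⊥
  · refine ⟨0, fun x hx y _ => ?_⟩
    rw [(Submodule.mem_bot ℂ).mp hx]
    simp
  obtain ⟨u, hu, hu0⟩ := Submodule.exists_mem_ne_zero_of_ne_bot hW
  obtain ⟨ρu, hρu, htru, hrgu, hAu⟩ := exists_pureState hu0
  refine ⟨(star u ⬝ᵥ M i *ᵥ u) / (star u ⬝ᵥ u), IsScalarOn.of_quadratic fun x hx => ?_⟩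
  obtain rfl | hx0 := eq_or_ne x 0
  · simp
  obtain ⟨ρx, hρx, htrx, hrgx, hAx⟩ := exists_pureState hx0
  have heq := hM i ρx ρu hρx htrx (hrgx.trans ((Submodule.span_singleton_le_iff_mem _ _).mpr hx))
    hρu htru (hrgu.trans ((Submodule.span_singleton_le_iff_mem _ _).mpr hu))
  rw [hAx, hAu] at heq
  rw [← heq, div_mul_cancel₀ _ (dotProduct_star_self_eq_zero.not.mpr hx0)]

theorem matIndistinguishable_iff {n ι : Type*} [Fintype n] {M : ι → Matrix n n ℂ}
    {W : Submodule ℂ (n → ℂ)} :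
    MatIndistinguishable M W ↔ ∀ i, ∃ c, IsScalarOn (M i) W c := by
  refine ⟨MatIndistinguishable.exists_isScalarOn, fun h i ρ₁ ρ₂ hρ₁ htr₁ hrg₁ hρ₂ htr₂ hrg₂ => ?_⟩
  obtain ⟨c, hc⟩ := h i
  rw [hc.trace_mul_eq hρ₁ hrg₁, hc.trace_mul_eq hρ₂ hrg₂, htr₁, htr₂]

theorem tensor_indistinguishable_of_indistinguishable_general
    (nA nB m l : ℕ)
    (M : Fin m → Matrix (Fin nA) (Fin nA) ℂ) (N : Fin l → Matrix (Fin nB) (Fin nB) ℂ)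
    (H₁ : Submodule ℂ (Fin nA → ℂ)) (H₂ : Submodule ℂ (Fin nB → ℂ))
    (hH₁ : MatIndistinguishable M H₁) (hH₂ : MatIndistinguishable N H₂) :
    MatIndistinguishable (fun p : Fin m × Fin l => M p.1 ⊗ₖ N p.2)
      (Submodule.span ℂ
        {v : Fin nA × Fin nB → ℂ | ∃ x ∈ H₁, ∃ y ∈ H₂, v = fun q => x q.1 * y q.2}) := by
  rw [matIndistinguishable_iff] at hH₁ hH₂ ⊢
  rintro ⟨i, j⟩
  obtain ⟨c, hc⟩ := hH₁ i
  obtain ⟨d, hd⟩ := hH₂ j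
  exact ⟨c * d, hc.kronecker hd⟩

/-- If H₁ is indistinguishable for the observable {M_i} on ℂ^{nA} and H₂ is
indistinguishable for the observable {N_j} on ℂ^{nB}, then H₁ ⊗ H₂ is indistinguishable
for the observable {M_i ⊗ N_j}. -/
theorem tensor_indistinguishable_of_indistinguishable
    (nA nB m l : ℕ)
    (M : Fin m → Matrix (Fin nA) (Fin nA) ℂ) (N : Fin l → Matrix (Fin nB) (Fin nB) ℂ)
    (hMpos : ∀ i, (M i).PosSemidef) (hMsum : ∑ i, M i = 1)
    (hNpos : ∀ j, (N j).PosSemidef) (hNsum : ∑ j, N j = 1)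
    (H₁ : Submodule ℂ (Fin nA → ℂ)) (H₂ : Submodule ℂ (Fin nB → ℂ))
    (hH₁ : MatIndistinguishable M H₁) (hH₂ : MatIndistinguishable N H₂) :
    MatIndistinguishable (fun p : Fin m × Fin l => M p.1 ⊗ₖ N p.2)
      (Submodule.span ℂ
        {v : Fin nA × Fin nB → ℂ | ∃ x ∈ H₁, ∃ y ∈ H₂, v = fun q => x q.1 * y q.2}) :=
  tensor_indistinguishable_of_indistinguishable_general nA nB m l M N H₁ H₂ hH₁ hH₂
end
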